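/- arXiv:1607.03814 — 6 statements merged into one kernel-verified Lean document; each statement's English description precedes it below -/
import Mathlib

section
/- Let Γ be a loose tree, modeled as a pair (Ĝ, S) where Ĝ is a finite tree with at least one edge. Let d_1 < d_2 < … < d_k be the degrees (computed in Ĝ) that are at least 2 and occur among vertices of S, let n_i be the number of vertices of S of degree d_i, let E be the number of vertices of S of degree 1, and set I = (n_1 + … + n_k) − 1 (an integer, possibly equal to −1). Then for every finite field k with q elements, the number of k-rational points satisfies |X_Γ(k)| = Σ_{i=1}^k n_i q^{d_i} − I·q + I + E. (This is the point-count over finite fields of the paper's Grothendieck-class formula [Γ]_{F1} = Σ_i n_i·L^{d_i} − I·L + I + E for the Deitmar scheme of a loose tree, combined with the paper's lifting theorem Ω([Γ]_{F1}) = [Γ]_k.) -/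
/-- The local affine chart `A_v^H(k)` of the vertex `v` of the graph `H`:
the set of points `[x]` of the projectivization of `k^V` such that `x_w = 0`
for every `w` outside `{v} ∪ N_H(v)`, and `x_v ≠ 0`. -/
def looseChart {V : Type} (H : SimpleGraph V) (k : Type) [Field k] (v : V) :
    Set (Projectivization k (V → k)) :=
  {p | (∀ w, w ∉ insert v (H.neighborSet v) → p.rep w = 0) ∧ p.rep v ≠ 0}

section Aux
set_option linter.unusedSectionVars false
variable {V : Type} [Fintype V] {G : SimpleGraph V} [DecidableRel G.Adj]
  {k : Type} [Field k] [Fintype k]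

instance : Finite (Projectivization k (V → k)) := Quotient.finite _

lemma mem_looseChart_mk {v : V} {x : V → k} {hx : x ≠ 0} :
    Projectivization.mk k x hx ∈ looseChart G k v ↔
      (∀ w, w ∉ insert v (G.neighborSet v) → x w = 0) ∧ x v ≠ 0 := by
  obtain ⟨a, ha⟩ := Projectivization.exists_smul_eq_mk_rep k x hx
  have hrep : ∀ w, (Projectivization.mk k x hx).rep w = (a : k) * x w := by
    intro w; rw [← ha]; rfl
  constructor
  · rintro ⟨h1, h2⟩
    refine ⟨fun w hw => ?_, fun h => h2 ?_⟩
    · have := h1 w hw; rw [hrep] at this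
      exact (mul_eq_zero.1 this).resolve_left a.ne_zero
    · rw [hrep, h, mul_zero]
  · rintro ⟨h1, h2⟩
    refine ⟨fun w hw => by rw [hrep, h1 w hw, mul_zero], fun h => h2 ?_⟩
    rw [hrep] at h
    exact (mul_eq_zero.1 h).resolve_left a.ne_zero

lemma ncard_looseChart (v : V) :
    (looseChart G k v).ncard = Fintype.card k ^ G.degree v := by
  classical
  let D := {x : V → k // x v = 1 ∧ ∀ w, w ∉ insert v (G.neighborSet v) → x w = 0}
  have hne : ∀ x : D, x.1 ≠ 0 := fun x h => by
    have := x.2.1; rw [h] at this; simp at this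
  let f : D → Projectivization k (V → k) := fun x => Projectivization.mk k x.1 (hne x)
  have hrange : Set.range f = looseChart G k v := by
    ext p
    constructor
    · rintro ⟨x, rfl⟩
      exact mem_looseChart_mk.2 ⟨x.2.2, by rw [x.2.1]; exact one_ne_zero⟩
    · rintro ⟨h1, h2⟩
      refine ⟨⟨(p.rep v)⁻¹ • p.rep, by simp [h2], fun w hw => by simp [h1 w hw]⟩, ?_⟩
      show Projectivization.mk k _ _ = p
      conv_rhs => rw [← p.mk_rep]
      rw [Projectivization.mk_eq_mk_iff']
      exact ⟨(p.rep v)⁻¹, rfl⟩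
  have hinj : Function.Injective f := by
    intro x y hxy
    rw [Projectivization.mk_eq_mk_iff'] at hxy
    obtain ⟨c, hc⟩ := hxy
    have : c = 1 := by
      have := congrFun hc v
      simpa [y.2.1, x.2.1] using this
    subst this
    exact Subtype.ext (by simpa using hc.symm)
  have e1 : (looseChart G k v).ncard = Nat.card D := by
    rw [← hrange, ← Nat.card_coe_set_eq, Nat.card_congr (Equiv.ofInjective f hinj).symm]
  rw [e1]
  have e2 : D ≃ (G.neighborSet v → k) :=
    { toFun := fun x w => x.1 w
      invFun := fun g => ⟨fun w => if h : w = v then 1 else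
          if h2 : w ∈ G.neighborSet v then g ⟨w, h2⟩ else 0, by simp, fun w hw => by
            simp only [Set.mem_insert_iff] at hw
            push_neg at hw
            simp [hw.1, hw.2]⟩
      left_inv := by
        rintro ⟨x, hx1, hx2⟩
        ext w
        by_cases h : w = v
        · simp [h, hx1]
        · by_cases h2 : w ∈ G.neighborSet v
          · simp [h, h2]
          · simp only [h, h2, dif_neg, not_false_iff]
            exact (hx2 w (by simp [h, h2])).symm
      right_inv := by
        intro g; ext w
        have h1 : (w : V) ≠ v := by
          have := w.2; intro h; rw [h] at this; exact G.irrefl this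
        simp [h1, w.2] }
  rw [Nat.card_congr e2, Nat.card_eq_fintype_card, Fintype.card_fun,
    G.card_neighborSet_eq_degree]
end Aux

section Aux2
set_option linter.unusedSectionVars false
variable {V : Type} [Fintype V] {G : SimpleGraph V} [DecidableRel G.Adj]
  {k : Type} [Field k] [Fintype k]

lemma looseChart_disjoint {u v : V} (huv : u ≠ v) (h : ¬G.Adj u v) :
    looseChart G k u ∩ looseChart G k v = ∅ := by
  ext p
  simp only [Set.mem_inter_iff, Set.mem_empty_iff_false, iff_false]
  rintro ⟨⟨_, h2⟩, ⟨h3, _⟩⟩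
  refine h2 (h3 u ?_)
  simp only [Set.mem_insert_iff, SimpleGraph.mem_neighborSet]
  push_neg
  exact ⟨huv, fun hv => h hv.symm⟩

lemma no_triangle (hA : G.IsAcyclic) {a b c : V}
    (hab : G.Adj a b) (hbc : G.Adj b c) (hca : G.Adj c a) : False := by
  have hcyc : ¬ (SimpleGraph.Walk.cons hab (SimpleGraph.Walk.cons hbc
      (SimpleGraph.Walk.cons hca SimpleGraph.Walk.nil))).IsCycle := hA _
  apply hcyc
  have h1 : a ≠ b := hab.ne
  have h2 : b ≠ c := hbc.ne
  have h3 : c ≠ a := hca.ne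
  simp [SimpleGraph.Walk.isCycle_def, SimpleGraph.Walk.isTrail_def,
    h1, h2, h3, h1.symm, h2.symm, h3.symm, Sym2.eq, Sym2.rel_iff]

lemma looseChart_triple (hA : G.IsAcyclic) {u v w : V} (huv : u ≠ v) (huw : u ≠ w)
    (hvw : v ≠ w) :
    looseChart G k u ∩ looseChart G k v ∩ looseChart G k w = ∅ := by
  ext p
  simp only [Set.mem_inter_iff, Set.mem_empty_iff_false, iff_false]
  rintro ⟨⟨⟨hu1, hu2⟩, ⟨hv1, hv2⟩⟩, ⟨hw1, hw2⟩⟩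
  have key : ∀ a b : V, a ≠ b → p.rep a ≠ 0 →
      (∀ x, x ∉ insert b (G.neighborSet b) → p.rep x = 0) → G.Adj b a := by
    intro a b hab ha hb
    by_contra hadj
    refine ha (hb a ?_)
    simp only [Set.mem_insert_iff, SimpleGraph.mem_neighborSet]
    push_neg
    exact ⟨hab, hadj⟩
  have h1 : G.Adj v u := key u v huv hu2 hv1
  have h2 : G.Adj w u := key u w huw hu2 hw1
  have h3 : G.Adj w v := key v w hvw hv2 hw1
  exact no_triangle hA h1.symm h3.symm h2

lemma ncard_looseChart_inter (hA : G.IsAcyclic) {u v : V} (huv : G.Adj u v) :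
    (looseChart G k u ∩ looseChart G k v).ncard = Fintype.card k - 1 := by
  classical
  let g : {c : k // c ≠ 0} → Projectivization k (V → k) := fun c =>
    Projectivization.mk k (fun w => if w = u then 1 else if w = v then c.1 else 0)
      (fun h => one_ne_zero (α := k) (by simpa using congrFun h u))
  have hrange : Set.range g = looseChart G k u ∩ looseChart G k v := by
    ext p
    constructor
    · rintro ⟨c, rfl⟩
      constructor
      · refine mem_looseChart_mk.2 ⟨fun w hw => ?_, by simp⟩
        simp only [Set.mem_insert_iff, SimpleGraph.mem_neighborSet] at hw
        push_neg at hw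
        have hwv : w ≠ v := fun h => hw.2 (h ▸ huv)
        simp [hw.1, hwv]
      · have hvu : v ≠ u := huv.ne'
        refine mem_looseChart_mk.2 ⟨fun w hw => ?_, by simp [hvu, c.2]⟩
        simp only [Set.mem_insert_iff, SimpleGraph.mem_neighborSet] at hw
        push_neg at hw
        have hwu : w ≠ u := fun h => hw.2 (h ▸ huv.symm)
        simp [hw.1, hwu]
    · rintro ⟨⟨hu1, hu2⟩, ⟨hv1, hv2⟩⟩
      refine ⟨⟨p.rep v / p.rep u, div_ne_zero hv2 hu2⟩, ?_⟩
      show Projectivization.mk k _ _ = p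
      conv_rhs => rw [← p.mk_rep]
      rw [Projectivization.mk_eq_mk_iff']
      refine ⟨(p.rep u)⁻¹, ?_⟩
      ext w
      by_cases hwu : w = u
      · subst hwu; simp [inv_mul_cancel₀ hu2]
      · by_cases hwv : w = v
        · subst hwv
          simp [hwu, div_eq_inv_mul]
        · have hzero : p.rep w = 0 := by
            by_cases hnu : w ∈ insert u (G.neighborSet u)
            · -- w ∈ N(u), w ≠ u; then w ∉ insert v N(v) else triangle
              apply hv1
              simp only [Set.mem_insert_iff, SimpleGraph.mem_neighborSet] at hnu ⊢
              push_neg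
              refine ⟨hwv, fun hadj => ?_⟩
              rcases hnu with h | h
              · exact hwu h
              · exact no_triangle hA huv hadj h.symm
            · exact hu1 w hnu
          simp [hwu, hwv, hzero]
  have hinj : Function.Injective g := by
    intro c d hcd
    rw [Projectivization.mk_eq_mk_iff'] at hcd
    obtain ⟨a, ha⟩ := hcd
    have h1 := congrFun ha u
    have h2 := congrFun ha v
    have hvu : v ≠ u := huv.ne'
    simp [hvu] at h1 h2
    exact Subtype.ext (by rw [← h2, h1, one_mul])
  rw [← hrange, ← Nat.card_coe_set_eq,
    Nat.card_congr (Equiv.ofInjective g hinj).symm, Nat.card_congr unitsEquivNeZero.symm,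
    Nat.card_eq_fintype_card, Fintype.card_units]
end Aux2

section Count
set_option linter.unusedSectionVars false
variable {α : Type*} {ι : Type*}

lemma ncard_biUnion_disj (s : Finset ι) (f : ι → Set α)
    (hfin : ∀ i ∈ s, (f i).Finite)
    (hd : ∀ i ∈ s, ∀ j ∈ s, i ≠ j → f i ∩ f j = ∅) :
    (⋃ i ∈ s, f i).ncard = ∑ i ∈ s, (f i).ncard := by
  classical
  induction s using Finset.induction with
  | empty => simp
  | @insert a s ha ih =>
    rw [Finset.set_biUnion_insert, Finset.sum_insert ha]
    have h2 : (⋃ i ∈ s, f i).Finite := by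
      apply Set.Finite.biUnion s.finite_toSet
      intro i hi; exact hfin i (Finset.mem_insert_of_mem hi)
    have hdisj : Disjoint (f a) (⋃ i ∈ s, f i) := by
      rw [Set.disjoint_iff_inter_eq_empty]
      ext p
      simp only [Set.mem_inter_iff, Set.mem_iUnion, Set.mem_empty_iff_false, iff_false, not_and]
      rintro hpa ⟨i, hi, hpi⟩
      have : f a ∩ f i = ∅ := hd a (Finset.mem_insert_self a s) i
        (Finset.mem_insert_of_mem hi) (fun h => ha (h ▸ hi))
      have hmem : p ∈ f a ∩ f i := ⟨hpa, hpi⟩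
      rw [this] at hmem
      exact hmem
    rw [Set.ncard_union_eq hdisj (hfin a (Finset.mem_insert_self a s)) h2,
      ih (fun i hi => hfin i (Finset.mem_insert_of_mem hi))
        (fun i hi j hj hij => hd i (Finset.mem_insert_of_mem hi) j
          (Finset.mem_insert_of_mem hj) hij)]
end Count

section Main
set_option linter.unusedSectionVars false
open scoped Classical
variable {V : Type} [Fintype V] {G : SimpleGraph V} [DecidableRel G.Adj]
  {k : Type} [Field k] [Fintype k]

lemma edge_filter_insert (a : V) (S : Finset V) (ha : a ∉ S) :
    (G.edgeFinset.filter fun e => ∀ x ∈ e, x ∈ insert a S).card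
      = (G.edgeFinset.filter fun e => ∀ x ∈ e, x ∈ S).card
        + (S.filter (G.Adj a)).card := by
  set F := G.edgeFinset.filter fun e => ∀ x ∈ e, x ∈ insert a S with hF
  have hsplit := Finset.card_filter_add_card_filter_not
    (s := F) (p := fun e => a ∈ e)
  have h1 : F.filter (fun e => ¬ a ∈ e) = G.edgeFinset.filter (fun e => ∀ x ∈ e, x ∈ S) := by
    rw [hF, Finset.filter_filter]
    ext e
    simp only [Finset.mem_filter]
    constructor
    · rintro ⟨he, hmem, hna⟩
      refine ⟨he, fun x hx => ?_⟩
      rcases Finset.mem_insert.1 (hmem x hx) with rfl | hxs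
      · exact absurd hx hna
      · exact hxs
    · rintro ⟨he, hmem⟩
      exact ⟨he, fun x hx => Finset.mem_insert_of_mem (hmem x hx),
        fun hae => ha (hmem a hae)⟩
  have h2 : (S.filter (G.Adj a)).card = (F.filter (fun e => a ∈ e)).card := by
    apply Finset.card_bij (fun v _ => s(a, v))
    · intro v hv
      obtain ⟨hvS, hadj⟩ := Finset.mem_filter.1 hv
      refine Finset.mem_filter.2 ⟨Finset.mem_filter.2 ⟨SimpleGraph.mem_edgeFinset.2 hadj, ?_⟩,
        Sym2.mem_mk_left a v⟩
      intro x hx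
      rcases Sym2.mem_iff.1 hx with h | h
      · rw [h]; exact Finset.mem_insert_self a S
      · rw [h]; exact Finset.mem_insert_of_mem hvS
    · intro v hv v' hv' hvv'
      exact Sym2.congr_right.1 hvv'
    · intro e he
      obtain ⟨heF, hae⟩ := Finset.mem_filter.1 he
      obtain ⟨heE, hmem⟩ := Finset.mem_filter.1 heF
      obtain ⟨b, rfl⟩ := Sym2.mem_iff_exists.1 hae
      have hadj : G.Adj a b := SimpleGraph.mem_edgeFinset.1 heE
      have hbS : b ∈ S := by
        rcases Finset.mem_insert.1 (hmem b (Sym2.mem_mk_right a b)) with rfl | h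
        · exact absurd rfl hadj.ne
        · exact h
      exact ⟨b, Finset.mem_filter.2 ⟨hbS, hadj⟩, rfl⟩
  rw [← hsplit, h1, ← h2, add_comm]

lemma union_count (hA : G.IsAcyclic) (S : Finset V) :
    (⋃ v ∈ S, looseChart G k v).ncard
      + (G.edgeFinset.filter fun e => ∀ x ∈ e, x ∈ S).card * (Fintype.card k - 1)
      = ∑ v ∈ S, Fintype.card k ^ G.degree v := by
  induction S using Finset.induction with
  | empty =>
    have hfe : (G.edgeFinset.filter fun e => ∀ x ∈ e, x ∈ (∅ : Finset V)) = ∅ := by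
      apply Finset.filter_false_of_mem
      intro e _
      induction e using Sym2.ind with
      | _ x y =>
        push_neg
        exact ⟨x, Sym2.mem_mk_left x y, Finset.notMem_empty x⟩
    rw [hfe]
    simp
  | @insert a s ha ih =>
    rw [Finset.set_biUnion_insert, Finset.sum_insert ha, edge_filter_insert a s ha]
    have hCfin : ∀ v : V, (looseChart G k v).Finite := fun v => Set.toFinite _
    have hUfin : (⋃ v ∈ s, looseChart G k v).Finite :=
      Set.Finite.biUnion s.finite_toSet (fun i _ => hCfin i)
    have key := Set.ncard_union_add_ncard_inter (looseChart G k a)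
      (⋃ v ∈ s, looseChart G k v) (hCfin a) hUfin
    have hint : looseChart G k a ∩ ⋃ v ∈ s, looseChart G k v
        = ⋃ v ∈ s.filter (G.Adj a), (looseChart G k a ∩ looseChart G k v) := by
      ext p
      simp only [Set.mem_inter_iff, Set.mem_iUnion, Finset.mem_filter]
      constructor
      · rintro ⟨hpa, v, hv, hpv⟩
        refine ⟨v, ⟨hv, ?_⟩, hpa, hpv⟩
        by_contra hadj
        have hav : a ≠ v := fun h => ha (h ▸ hv)
        have hdisj := looseChart_disjoint (G := G) (k := k) hav hadj
        have hmem : p ∈ looseChart G k a ∩ looseChart G k v := ⟨hpa, hpv⟩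
        rw [hdisj] at hmem
        exact hmem
      · rintro ⟨v, ⟨hv, _⟩, hpa, hpv⟩
        exact ⟨hpa, v, hv, hpv⟩
    have hcard : (looseChart G k a ∩ ⋃ v ∈ s, looseChart G k v).ncard
        = (s.filter (G.Adj a)).card * (Fintype.card k - 1) := by
      rw [hint, ncard_biUnion_disj _ _ (fun i _ => Set.toFinite _) ?_]
      · rw [Finset.sum_congr rfl
          (fun v hv => ncard_looseChart_inter hA (Finset.mem_filter.1 hv).2),
          Finset.sum_const, smul_eq_mul]
      · intro i hi j hj hij
        have hia : i ≠ a := fun h => ha (h ▸ (Finset.mem_filter.1 hi).1)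
        have hja : j ≠ a := fun h => ha (h ▸ (Finset.mem_filter.1 hj).1)
        have htriple := looseChart_triple (G := G) (k := k) hA hij hia hja
        rw [Set.eq_empty_iff_forall_notMem]
        rintro p ⟨⟨hpa, hpi⟩, ⟨_, hpj⟩⟩
        have hmem : p ∈ looseChart G k i ∩ looseChart G k j ∩ looseChart G k a :=
          ⟨⟨hpi, hpj⟩, hpa⟩
        rw [htriple] at hmem
        exact hmem
    rw [hcard, ncard_looseChart (G := G) (k := k) a] at key
    rw [add_mul]
    set X := (looseChart G k a ∪ ⋃ v ∈ s, looseChart G k v).ncard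
    set U := (⋃ v ∈ s, looseChart G k v).ncard
    set m := (s.filter (G.Adj a)).card
    set eS := (G.edgeFinset.filter fun e => ∀ x ∈ e, x ∈ s).card
    set q1 := Fintype.card k - 1
    set A := Fintype.card k ^ G.degree a
    set Sig := ∑ v ∈ s, Fintype.card k ^ G.degree v
    set p1 := eS * q1
    set p2 := m * q1
    omega
end Main

section Final
set_option linter.unusedSectionVars false
open scoped Classical
variable {V : Type} [Fintype V] {G : SimpleGraph V} [DecidableRel G.Adj]

lemma edge_outside (S : Finset V)
    (hS1 : ∀ v ∉ S, G.degree v = 1)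
    (hS2 : ∀ a b, G.Adj a b → a ∈ S ∨ b ∈ S) :
    (Finset.univ.filter (fun v : V => v ∉ S)).card
      = (G.edgeFinset.filter fun e => ¬ ∀ x ∈ e, x ∈ S).card := by
  have huniq : ∀ v, v ∉ S → ∃ e, G.incidenceFinset v = {e} := by
    intro v hv
    apply Finset.card_eq_one.1
    rw [G.card_incidenceFinset_eq_degree]
    exact hS1 v hv
  choose f hf using huniq
  have hfmem : ∀ v (hv : v ∉ S), f v hv ∈ G.incidenceFinset v := by
    intro v hv; rw [hf v hv]; exact Finset.mem_singleton_self _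
  apply Finset.card_bij (fun v hv => f v (Finset.mem_filter.1 hv).2)
  · intro v hv
    have hm := hfmem v (Finset.mem_filter.1 hv).2
    rw [SimpleGraph.mem_incidenceFinset] at hm
    refine Finset.mem_filter.2 ⟨SimpleGraph.mem_edgeFinset.2 hm.1, ?_⟩
    push_neg
    exact ⟨v, hm.2, (Finset.mem_filter.1 hv).2⟩
  · intro v hv v' hv' heq
    by_contra hne
    have hm := hfmem v (Finset.mem_filter.1 hv).2
    have hm' := hfmem v' (Finset.mem_filter.1 hv').2
    rw [SimpleGraph.mem_incidenceFinset] at hm hm'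
    rw [heq] at hm
    have : f v' (Finset.mem_filter.1 hv').2 = s(v, v') :=
      (Sym2.mem_and_mem_iff hne).1 ⟨hm.2, hm'.2⟩
    have hadj : G.Adj v v' := by
      have hE := hm'.1
      rw [this] at hE
      exact hE
    rcases hS2 v v' hadj with h | h
    · exact (Finset.mem_filter.1 hv).2 h
    · exact (Finset.mem_filter.1 hv').2 h
  · intro e he
    obtain ⟨heE, hne⟩ := Finset.mem_filter.1 he
    push_neg at hne
    obtain ⟨x, hxe, hxS⟩ := hne
    refine ⟨x, Finset.mem_filter.2 ⟨Finset.mem_univ x, hxS⟩, ?_⟩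
    have : e ∈ G.incidenceFinset x :=
      (SimpleGraph.mem_incidenceFinset (G := G) (v := x) e).2 ⟨SimpleGraph.mem_edgeFinset.1 heE, hxe⟩
    rw [hf x hxS] at this
    exact (Finset.mem_singleton.1 this).symm
end Final


/-- The point count over a finite field `k` with `q` elements of the scheme of a
loose tree `Γ = (Ĝ, S)`:
`|X_Γ(k)| = Σ_{i=1}^k n_i q^{d_i} − I·q + I + E`,
where the `d_i` are the degrees `≥ 2` occurring among vertices of `S`, `n_i` the
number of vertices of `S` of degree `d_i` (so the sum equals
`Σ_{v ∈ S, deg v ≥ 2} q^{deg v}`), `E` the number of vertices of `S` of degree `1`,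
and `I = Σ_i n_i − 1` (an integer, possibly `−1`). -/
theorem card_points_of_loose_tree {V : Type} [Fintype V]
    (G : SimpleGraph V) [DecidableRel G.Adj]
    (hTree : G.IsTree) (hEdge : ∃ a b, G.Adj a b)
    (S : Finset V)
    (hS1 : ∀ v ∉ S, G.degree v = 1)
    (hS2 : ∀ a b, G.Adj a b → a ∈ S ∨ b ∈ S)
    (k : Type) [Field k] [Fintype k] (q : ℕ) (hq : Fintype.card k = q)
    (E I : ℤ)
    (hE : E = ((S.filter fun v => G.degree v = 1).card : ℤ))
    (hI : I = ((S.filter fun v => 2 ≤ G.degree v).card : ℤ) - 1) :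
    ((⋃ v ∈ S, looseChart G k v).ncard : ℤ)
      = (∑ v ∈ S.filter fun v => 2 ≤ G.degree v, (q : ℤ) ^ (G.degree v))
        - I * q + I + E := by
  classical
  subst hq
  have hA : G.IsAcyclic := hTree.2
  have hcount := union_count (G := G) (k := k) hA S
  -- edge count inside S
  have hsplitE := Finset.card_filter_add_card_filter_not
    (s := G.edgeFinset) (p := fun e => ∀ x ∈ e, x ∈ S)
  have hout := edge_outside (G := G) S hS1 hS2
  have houtcard : (Finset.univ.filter (fun v : V => v ∉ S)).card
      = Fintype.card V - S.card := by
    have : Finset.univ.filter (fun v : V => v ∉ S) = Sᶜ := by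
      ext v; simp
    rw [this, Finset.card_compl]
  have htreeE := hTree.card_edgeFinset
  have hSle : S.card ≤ Fintype.card V := Finset.card_le_univ S
  have hSpos : 1 ≤ S.card := by
    obtain ⟨a, b, hab⟩ := hEdge
    rcases hS2 a b hab with h | h
    · exact Finset.card_pos.2 ⟨a, h⟩
    · exact Finset.card_pos.2 ⟨b, h⟩
  have heS : (G.edgeFinset.filter fun e => ∀ x ∈ e, x ∈ S).card + 1 = S.card := by
    omega
  -- degrees are at least one
  have hdeg : ∀ v : V, 1 ≤ G.degree v := by
    intro v
    rw [Nat.succ_le_iff, SimpleGraph.degree_pos_iff_exists_adj]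
    obtain ⟨a, b, hab⟩ := hEdge
    by_cases hva : v = a
    · exact ⟨b, hva ▸ hab⟩
    · obtain ⟨p⟩ := hTree.1.preconnected v a
      cases p with
      | nil => exact absurd rfl hva
      | cons h _ => exact ⟨_, h⟩
  -- split S by degree
  have hsplitS := Finset.card_filter_add_card_filter_not
    (s := S) (p := fun v => 2 ≤ G.degree v)
  have hfilteq : S.filter (fun v => ¬ 2 ≤ G.degree v) = S.filter (fun v => G.degree v = 1) := by
    apply Finset.filter_congr
    intro v _
    have := hdeg v
    constructor
    · intro h; omega
    · intro h; omega
  rw [hfilteq] at hsplitS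
  -- split the sum
  have hsum := Finset.sum_filter_add_sum_filter_not S (fun v => 2 ≤ G.degree v)
    (fun v => (Fintype.card k : ℤ) ^ G.degree v)
  rw [hfilteq] at hsum
  have hsum1 : ∑ v ∈ S.filter (fun v => G.degree v = 1), (Fintype.card k : ℤ) ^ G.degree v
      = E * (Fintype.card k : ℤ) := by
    rw [Finset.sum_congr rfl (fun v hv => by
      rw [(Finset.mem_filter.1 hv).2, pow_one])]
    rw [Finset.sum_const, hE, nsmul_eq_mul]
  -- cast the count to ℤ
  have hq1 : 1 ≤ Fintype.card k := Fintype.card_pos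
  have hcountZ : ((⋃ v ∈ S, looseChart G k v).ncard : ℤ)
      + ((G.edgeFinset.filter fun e => ∀ x ∈ e, x ∈ S).card : ℤ)
        * ((Fintype.card k : ℤ) - 1)
      = ∑ v ∈ S, (Fintype.card k : ℤ) ^ G.degree v := by
    have := congrArg (fun n : ℕ => (n : ℤ)) hcount
    push_cast [Nat.cast_sub hq1] at this
    linarith [this]
  have heSZ : ((G.edgeFinset.filter fun e => ∀ x ∈ e, x ∈ S).card : ℤ) = I + E := by
    have h1 : ((G.edgeFinset.filter fun e => ∀ x ∈ e, x ∈ S).card : ℤ) + 1 = (S.card : ℤ) := by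
      exact_mod_cast congrArg (fun n : ℕ => (n : ℤ)) heS
    have h2 : (S.card : ℤ) = (I + 1) + E := by
      rw [hI, hE]
      push_cast [← hsplitS]
      ring
    linarith
  rw [heSZ] at hcountZ
  rw [← hsum, hsum1] at hcountZ
  linear_combination hcountZ
end

section
/- Let Γ be a loose graph modeled as a pair (Ĝ, S), let k be any field, and let u, v be two distinct vertices in S. Then A_u^{Ĝ}(k) ∩ A_v^{Ĝ}(k) ≠ ∅ if and only if u and v are adjacent in Ĝ. (This is the rational-points version of the paper's Lemma: the affine open subschemes Spec(E_u) and Spec(E_v) of F(Γ) attached to two vertices intersect nontrivially if and only if the vertices are adjacent.) -/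
/-- Two local affine charts of a loose graph `Γ = (Ĝ, S)` attached to distinct
vertices `u, v ∈ S` intersect nontrivially if and only if `u` and `v` are
adjacent in `Ĝ`. -/
theorem charts_intersect_iff_adjacent {V : Type} [Fintype V]
    (G : SimpleGraph V) [DecidableRel G.Adj] (S : Finset V)
    (hS1 : ∀ v ∉ S, G.degree v = 1)
    (hS2 : ∀ a b, G.Adj a b → a ∈ S ∨ b ∈ S)
    (k : Type) [Field k]
    (u v : V) (hu : u ∈ S) (hv : v ∈ S) (huv : u ≠ v) :
    (looseChart G k u ∩ looseChart G k v).Nonempty ↔ G.Adj u v := by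
  constructor
  · rintro ⟨p, ⟨_, hune⟩, ⟨hv0, _⟩⟩
    by_contra hadj
    exact hune (hv0 u (by
      simp only [Set.mem_insert_iff, SimpleGraph.mem_neighborSet]
      push_neg
      exact ⟨huv, fun h => hadj h.symm⟩))
  · intro hadj
    classical
    set x : V → k := fun w => if w = u ∨ w = v then 1 else 0 with hxdef
    have hxu : x u = 1 := by simp [hxdef]
    have hx0 : x ≠ 0 := by
      intro h
      have := congrFun h u
      rw [hxu] at this
      simp at this
    set p := Projectivization.mk k x hx0 with hp
    obtain ⟨a, ha⟩ :=
      (Projectivization.mk_eq_mk_iff k _ _ p.rep_nonzero hx0).mp p.mk_rep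
    have hrep : ∀ w, p.rep w = (a : k) * x w := fun w => (congrFun ha w).symm
    have hzero : ∀ w, w ≠ u → w ≠ v → p.rep w = 0 := by
      intro w h1 h2
      rw [hrep w]
      simp [hxdef, h1, h2]
    refine ⟨p, ⟨?_, ?_⟩, ?_, ?_⟩
    · intro w hw
      simp only [Set.mem_insert_iff, SimpleGraph.mem_neighborSet] at hw
      push_neg at hw
      refine hzero w hw.1 (fun h => ?_)
      exact hw.2 (h ▸ hadj)
    · rw [hrep u]
      simp [hxdef]
    · intro w hw
      simp only [Set.mem_insert_iff, SimpleGraph.mem_neighborSet] at hw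
      push_neg at hw
      refine hzero w (fun h => ?_) hw.1
      exact hw.2 (h ▸ hadj.symm)
    · rw [hrep v]
      simp [hxdef]
end

section
/- (Affection Principle.) Let Γ = (Ĝ, S) be a finite connected loose graph, let xy be an edge of Ĝ with both endpoints x, y ∈ S, and let (Ĝ', S) be the resolution of Γ along xy. Let k be any field and let S₀ be any nonempty subset of S. Then the coordinate inclusion ι : ℙ(k^{V(Ĝ)}) → ℙ(k^{V(Ĝ')}) restricts to a bijection from (⋂_{s ∈ S₀} A_s^{Ĝ}(k)) ∖ P_{x,y}(k) onto (⋂_{s ∈ S₀} A_s^{Ĝ'}(k)) ∖ P'_{x,y}(k). In particular, the intersection ⋂_{s ∈ S₀} A_s of local affine charts changes under resolving the edge xy only inside the projective subspace P_{x,y} generated by the closed balls of radius 1 around x and y. -/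
/-- The closed ball of radius 1 around `u` in the graph `H`. -/
def closedBall {V : Type} (H : SimpleGraph V) (u : V) : Set V :=
  insert u (H.neighborSet u)

/-- The projective subspace `P_{x,y}(k)` generated by the closed balls of
radius 1 around `x` and `y`. -/
def ballSpace {V : Type} (H : SimpleGraph V) (k : Type) [Field k] (x y : V) :
    Set (Projectivization k (V → k)) :=
  {p | ∀ w, w ∉ closedBall H x ∪ closedBall H y → p.rep w = 0}

/-- The completion `Ĝ'` of the resolution of the loose graph `(Ĝ, S)` along the
edge `xy`: the edge `xy` is deleted and two new pendant vertices `x̃ = inr false`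
and `ỹ = inr true` are attached to `x` and `y` respectively. -/
def resGraph {V : Type} (G : SimpleGraph V) (x y : V) : SimpleGraph (V ⊕ Bool) where
  Adj a b :=
    match a, b with
    | Sum.inl a, Sum.inl b => G.Adj a b ∧ ¬((a = x ∧ b = y) ∨ (a = y ∧ b = x))
    | Sum.inl a, Sum.inr c => (c = false ∧ a = x) ∨ (c = true ∧ a = y)
    | Sum.inr c, Sum.inl a => (c = false ∧ a = x) ∨ (c = true ∧ a = y)
    | Sum.inr _, Sum.inr _ => False
  symm := by
    constructor
    rintro (a | c) (b | d) h
    · exact ⟨h.1.symm, fun hc => h.2 (by tauto)⟩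
    · exact h
    · exact h
    · exact h
  loopless := by
    constructor
    rintro (a | c) h
    · exact G.irrefl h.1
    · exact h

/-- Extension by zero, as a linear map `k^V → k^{V ⊕ Bool}`. -/
def extByZero (k : Type) [Field k] {V : Type} : (V → k) →ₗ[k] (V ⊕ Bool → k) where
  toFun f := Sum.elim f 0
  map_add' f g := by funext w; cases w <;> simp
  map_smul' c f := by funext w; cases w <;> simp

theorem extByZero_injective (k : Type) [Field k] {V : Type} :
    Function.Injective (extByZero k (V := V)) := by
  intro f g h
  funext v
  exact congrFun h (Sum.inl v)

/-!
A point of `A_x` or `A_y` is supported in the ball around `x` or `y`, hence lies in `P_{x,y}`;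
so only charts at vertices `s ∉ {x, y}` matter. Resolving `xy` does not change the closed ball
around such an `s`, and it changes the union of the balls around `x` and `y` only by the two new
pendant vertices. Membership in either side is therefore a condition on supports that `ι`
preserves and reflects, and a point of the right-hand side, being supported in the ball around
some `s ∈ S₀`, vanishes on the new vertices and so comes from `ℙ(k^{V(Ĝ)})`.
-/

open Function Set

lemma Function.Injective.bijOn_preimage_of_subset_range {α β : Type*} {f : α → β}
    (hf : Injective f) {t : Set β} (ht : t ⊆ range f) : BijOn f (f ⁻¹' t) t := by
  simpa only [image_preimage_eq_of_subset ht] using hf.bijOn_image (s := f ⁻¹' t)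

section Support

variable {W : Type} {k : Type} [Field k]

lemma Projectivization.support_rep_mk (f : W → k) (hf : f ≠ 0) :
    support (Projectivization.mk k f hf).rep = support f := by
  obtain ⟨a, ha⟩ := Projectivization.exists_smul_eq_mk_rep k f hf
  rw [← ha, Units.smul_def, support_const_smul_of_ne_zero _ _ a.ne_zero]

lemma mk_mem_looseChart_iff (H : SimpleGraph W) (v : W) (f : W → k) (hf : f ≠ 0) :
    Projectivization.mk k f hf ∈ looseChart H k v ↔ support f ⊆ closedBall H v ∧ f v ≠ 0 := by
  obtain ⟨a, ha⟩ := Projectivization.exists_smul_eq_mk_rep k f hf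
  rw [looseChart, mem_ofPred_eq, ← support_subset_iff', Projectivization.support_rep_mk, ← ha,
    Units.smul_def, Pi.smul_apply, smul_ne_zero_iff_right a.ne_zero]
  rfl

lemma mk_mem_ballSpace_iff (H : SimpleGraph W) (x y : W) (f : W → k) (hf : f ≠ 0) :
    Projectivization.mk k f hf ∈ ballSpace H k x y ↔
      support f ⊆ closedBall H x ∪ closedBall H y := by
  rw [ballSpace, mem_ofPred_eq, ← support_subset_iff', Projectivization.support_rep_mk]

lemma looseChart_subset_ballSpace (H : SimpleGraph W) {v x y : W} (hv : v = x ∨ v = y) :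
    looseChart H k v ⊆ ballSpace H k x y := by
  have hball : closedBall H v ⊆ closedBall H x ∪ closedBall H y := by
    rcases hv with rfl | rfl
    exacts [subset_union_left, subset_union_right]
  exact fun p hp w hw => hp.1 w fun hwv => hw (hball hwv)

end Support

section ExtByZero

variable {k : Type} [Field k] {V : Type}

@[simp]
lemma extByZero_apply_inl (f : V → k) (v : V) : extByZero k f (Sum.inl v) = f v := rfl

lemma support_extByZero (f : V → k) : support (extByZero k f) = Sum.inl '' support f := by
  ext (w | c) <;> simp [extByZero]

lemma extByZero_comp_inl {g : V ⊕ Bool → k} (hg : support g ⊆ range Sum.inl) :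
    extByZero k (g ∘ Sum.inl) = g := by
  funext w
  rcases w with w | c
  · rfl
  · exact (notMem_support.1 fun hc => by simpa using hg hc).symm

lemma range_map_extByZero :
    range (Projectivization.map (extByZero k (V := V)) (extByZero_injective k)) =
      {q | support q.rep ⊆ range Sum.inl} := by
  ext q
  constructor
  · rintro ⟨p, rfl⟩
    induction p using Projectivization.ind with
    | h f hf =>
      rw [Projectivization.map_mk, mem_ofPred_eq, Projectivization.support_rep_mk,
        support_extByZero]
      exact image_subset_range _ _
  · intro hq
    have hrep := extByZero_comp_inl hq
    have hne : q.rep ∘ Sum.inl ≠ 0 := fun h0 => q.rep_nonzero (by rw [← hrep, h0, map_zero])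
    refine ⟨Projectivization.mk k _ hne, ?_⟩
    rw [Projectivization.map_mk]
    simp_rw [hrep]
    exact q.mk_rep

end ExtByZero

section Resolution

variable {k : Type} [Field k] {V : Type} (G : SimpleGraph V) (x y : V)

lemma closedBall_resGraph_inl {s : V} (hsx : s ≠ x) (hsy : s ≠ y) :
    closedBall (resGraph G x y) (Sum.inl s) = Sum.inl '' closedBall G s := by
  ext (w | c) <;> simp [closedBall, resGraph, hsx, hsy]

lemma preimage_inl_closedBall_resGraph_union :
    Sum.inl ⁻¹' (closedBall (resGraph G x y) (Sum.inl x) ∪ closedBall (resGraph G x y) (Sum.inl y))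
      = closedBall G x ∪ closedBall G y := by
  ext w
  simp only [closedBall, resGraph, not_or, not_and, union_insert, mem_preimage, mem_insert_iff,
    Sum.inl.injEq, mem_union, SimpleGraph.mem_neighborSet, forall_const]
  tauto

local notation "ι" => Projectivization.map (extByZero k (V := V)) (extByZero_injective k)

lemma map_extByZero_mem_ballSpace_resGraph_iff (p : Projectivization k (V → k)) :
    ι p ∈ ballSpace (resGraph G x y) k (Sum.inl x) (Sum.inl y) ↔ p ∈ ballSpace G k x y := by
  induction p using Projectivization.ind with
  | h f hf =>
    rw [Projectivization.map_mk, mk_mem_ballSpace_iff, mk_mem_ballSpace_iff, support_extByZero,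
      image_subset_iff, preimage_inl_closedBall_resGraph_union]

lemma map_extByZero_mem_looseChart_resGraph_iff {p : Projectivization k (V → k)}
    (hp : p ∉ ballSpace G k x y) (s : V) :
    ι p ∈ looseChart (resGraph G x y) k (Sum.inl s) ↔ p ∈ looseChart G k s := by
  by_cases hsxy : s = x ∨ s = y
  · refine iff_of_false (fun h => hp ?_) (fun h => hp (looseChart_subset_ballSpace G hsxy h))
    exact (map_extByZero_mem_ballSpace_resGraph_iff G x y p).1
      (looseChart_subset_ballSpace _ (by simpa using hsxy) h)
  push Not at hsxy
  induction p using Projectivization.ind with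
  | h f hf =>
    rw [Projectivization.map_mk, mk_mem_looseChart_iff, mk_mem_looseChart_iff, support_extByZero,
      closedBall_resGraph_inl G x y hsxy.1 hsxy.2, image_subset_image_iff Sum.inl_injective,
      extByZero_apply_inl]

lemma preimage_map_extByZero_iInter_looseChart_diff_ballSpace (S₀ : Finset V) :
    ι ⁻¹' ((⋂ s ∈ S₀, looseChart (resGraph G x y) k (Sum.inl s)) \
        ballSpace (resGraph G x y) k (Sum.inl x) (Sum.inl y)) =
      (⋂ s ∈ S₀, looseChart G k s) \ ballSpace G k x y := by
  ext p
  simp only [mem_preimage, mem_sdiff, mem_iInter₂, map_extByZero_mem_ballSpace_resGraph_iff]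
  exact and_congr_left fun hp => forall₂_congr fun s _ =>
    map_extByZero_mem_looseChart_resGraph_iff G x y hp s

lemma iInter_looseChart_resGraph_diff_ballSpace_subset_range {S₀ : Finset V} (hS₀ : S₀.Nonempty) :
    (⋂ s ∈ S₀, looseChart (resGraph G x y) k (Sum.inl s)) \
        ballSpace (resGraph G x y) k (Sum.inl x) (Sum.inl y) ⊆ range ι := by
  obtain ⟨s, hs⟩ := hS₀
  rintro q ⟨hq, hqb⟩
  replace hq := mem_iInter₂.1 hq s hs
  have hsxy : s ≠ x ∧ s ≠ y := by
    constructor <;> rintro rfl <;> exact hqb (looseChart_subset_ballSpace _ (by simp) hq)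
  rw [range_map_extByZero, mem_ofPred_eq]
  refine (support_subset_iff'.2 hq.1).trans ?_
  rw [← closedBall, closedBall_resGraph_inl G x y hsxy.1 hsxy.2]
  exact image_subset_range _ _

end Resolution

theorem affection_principle_general {V : Type}
    (G : SimpleGraph V)
    (x y : V)
    (S₀ : Finset V) (hS₀ne : S₀.Nonempty)
    (k : Type) [Field k] :
    Set.BijOn (Projectivization.map (extByZero k (V := V)) (extByZero_injective k))
      ((⋂ s ∈ S₀, looseChart G k s) \ ballSpace G k x y)
      ((⋂ s ∈ S₀, looseChart (resGraph G x y) k (Sum.inl s)) \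
        ballSpace (resGraph G x y) k (Sum.inl x) (Sum.inl y)) :=
  preimage_map_extByZero_iInter_looseChart_diff_ballSpace (k := k) G x y S₀ ▸
    (Projectivization.map_injective _ _).bijOn_preimage_of_subset_range
      (iInter_looseChart_resGraph_diff_ballSpace_subset_range G x y hS₀ne)

/-- **Affection Principle.** Let `Γ = (Ĝ, S)` be a finite connected loose
graph, `xy` an edge with `x, y ∈ S`, and `(Ĝ', S)` the resolution of `Γ` along
`xy`. For any field `k` and any nonempty `S₀ ⊆ S`, the coordinate inclusion
`ι : ℙ(k^{V(Ĝ)}) → ℙ(k^{V(Ĝ')})` restricts to a bijection from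
`(⋂_{s ∈ S₀} A_s^{Ĝ}(k)) ∖ P_{x,y}(k)` onto
`(⋂_{s ∈ S₀} A_s^{Ĝ'}(k)) ∖ P'_{x,y}(k)`: the intersection of local charts
changes under resolution only inside `P_{x,y}`. -/
theorem affection_principle {V : Type} [Fintype V]
    (G : SimpleGraph V) [DecidableRel G.Adj] (S : Finset V)
    (hconn : G.Connected)
    (hS1 : ∀ v ∉ S, G.degree v = 1)
    (hS2 : ∀ a b, G.Adj a b → a ∈ S ∨ b ∈ S)
    (x y : V) (hxy : G.Adj x y) (hx : x ∈ S) (hy : y ∈ S)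
    (S₀ : Finset V) (hS₀ : S₀ ⊆ S) (hS₀ne : S₀.Nonempty)
    (k : Type) [Field k] :
    Set.BijOn (Projectivization.map (extByZero k (V := V)) (extByZero_injective k))
      ((⋂ s ∈ S₀, looseChart G k s) \ ballSpace G k x y)
      ((⋂ s ∈ S₀, looseChart (resGraph G x y) k (Sum.inl s)) \
        ballSpace (resGraph G x y) k (Sum.inl x) (Sum.inl y)) :=
  affection_principle_general G x y S₀ hS₀ne k
end

section
/- Let G be a finite connected simple graph with vertex set V and at least one edge. For a spanning tree T of G, let H_T be the loose graph obtained from G by resolving every edge of G not belonging to T: its completion Ĥ_T has vertex set V ⊔ { (e,u) : e ∈ E(G) ∖ E(T), u an endpoint of e }, edge set E(T) ∪ { {u,(e,u)} : e ∈ E(G) ∖ E(T), u an endpoint of e }, and vertex subset S = V. Then Ĥ_T is a tree, and for any two spanning trees T₁ and T₂ of G and every finite field k, the numbers of k-rational points coincide: |X_{H_{T₁}}(k)| = |X_{H_{T₂}}(k)|. (This is the point-count version of the paper's proposition that the Grothendieck polynomial of F(T̄) is independent of the choice of the spanning loose tree.) -/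
/-- Given a graph `G` and a spanning tree `T` of `G`, the completion `Ĥ_T` of
the loose graph obtained from `G` by resolving every edge of `G` not in `T`:
its vertices are `V ⊔ {(e,u) : e ∈ E(G) ∖ E(T), u an endpoint of e}` (a
non-tree edge `{u,v}` giving the two new pendant vertices `(u,v)` attached to
`u` and `(v,u)` attached to `v`), and its edges are those of `T` together with
the pendant edges `{u, (e,u)}`. -/
def spanningResolution {V : Type} (G T : SimpleGraph V) :
    SimpleGraph (V ⊕ {p : V × V // G.Adj p.1 p.2 ∧ ¬T.Adj p.1 p.2}) where
  Adj a b :=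
    match a, b with
    | Sum.inl a, Sum.inl b => T.Adj a b
    | Sum.inl a, Sum.inr p => a = p.1.1
    | Sum.inr p, Sum.inl a => a = p.1.1
    | Sum.inr _, Sum.inr _ => False
  symm := ⟨by
    rintro (a | p) (b | q) h
    · exact T.adj_symm h
    · exact h
    · exact h
    · exact h⟩
  loopless := ⟨by
    rintro (a | p) h
    · exact T.irrefl h
    · exact h⟩

open Finset

/-!
Resolving an edge only adds pendant vertices: every vertex of `V` keeps its `G`-degree in `Ĥ_T`
and every new vertex has degree one, so the handshake lemma shows that the connected graph `Ĥ_T`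
has one edge fewer than vertices, i.e. it is a tree.

The chart `A_v` is an affine space of dimension `deg v`. Two charts meet only along an edge `vw`,
where the intersection consists of the points supported on `{v, w}` and has `q - 1` elements, and
since the tree `Ĥ_T` has no triangles no three charts meet. Inclusion–exclusion therefore gives
`|X| = ∑_v q ^ deg_G v - (|V| - 1) (q - 1)`, which does not depend on `T`.
-/

theorem two_mul_ncard_iUnion_add_sum_offDiag {α ι : Type*} [Finite α] [Fintype ι]
    [DecidableEq ι] (A : ι → Set α) (hA : ∀ i j l, i ≠ j → i ≠ l → j ≠ l → A i ∩ A j ∩ A l = ∅) :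
    2 * (⋃ i, A i).ncard + ∑ p ∈ univ.offDiag, (A p.1 ∩ A p.2).ncard = 2 * ∑ i, (A i).ncard := by
  classical
  have := Fintype.ofFinite α
  have hcount (s : Set α) : s.ncard = ∑ x, if x ∈ s then 1 else 0 := by
    rw [Set.ncard_eq_toFinset_card', ← Finset.card_filter]
    congr 1
    ext
    simp
  set S : α → Finset ι := fun x => univ.filter (x ∈ A ·)
  have hS (x : α) : #(S x) ≤ 2 := by
    by_contra! h
    obtain ⟨i, hi, j, hj, l, hl, hij, hil, hjl⟩ := Finset.two_lt_card.1 h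
    simp only [S, Finset.mem_filter, Finset.mem_univ, true_and] at hi hj hl
    exact Set.eq_empty_iff_forall_notMem.1 (hA i j l hij hil hjl) x ⟨⟨hi, hj⟩, hl⟩
  have hunion : (⋃ i, A i).ncard = ∑ x, if 0 < #(S x) then 1 else 0 := by
    simp only [hcount, Set.mem_iUnion, Finset.card_pos, S, Finset.filter_nonempty_iff,
      Finset.mem_univ, true_and]
  have hsum : ∑ i, (A i).ncard = ∑ x, #(S x) := by
    simp only [hcount, S, Finset.card_filter]
    exact Finset.sum_comm
  have hoff : ∑ p ∈ univ.offDiag, (A p.1 ∩ A p.2).ncard = ∑ x, #(S x).offDiag := by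
    have hS' (x : α) : (S x).offDiag = univ.offDiag.filter (fun p => x ∈ A p.1 ∩ A p.2) := by
      ext p
      simp only [mem_offDiag, mem_filter, mem_univ, true_and, Set.mem_inter_iff, S]
      tauto
    simp only [hcount, hS', Finset.card_filter]
    convert Finset.sum_comm
  rw [hunion, hsum, hoff, Finset.mul_sum, Finset.mul_sum, ← Finset.sum_add_distrib]
  refine Finset.sum_congr rfl fun x _ => ?_
  rw [Finset.offDiag_card]
  have := hS x
  interval_cases #(S x) <;> simp

open scoped LinearAlgebra.Projectivization

namespace Projectivization

variable {K V : Type*} [DivisionRing K] [AddCommGroup V] [Module K V]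

theorem rep_mk_apply_eq_zero_iff {ι : Type*} {x : ι → K} (hx : x ≠ 0) (i : ι) :
    (mk K x hx).rep i = 0 ↔ x i = 0 := by
  obtain ⟨a, ha⟩ := exists_smul_eq_mk_rep K x hx
  rw [← ha, Pi.smul_apply, Units.smul_def, smul_eq_mul, mul_eq_zero]
  simp

end Projectivization

section looseChart

open Projectivization

variable {W k : Type} [Field k]

def supportedChart (k : Type) [Field k] (v : W) (s : Set W) : Set (ℙ k (W → k)) :=
  {p | (∀ w, w ∉ s → p.rep w = 0) ∧ p.rep v ≠ 0}

noncomputable def supportedChartEquiv (v : W) (s : Set W) :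
    supportedChart k v s ≃ {x : W → k // x v = 1 ∧ ∀ w, w ∉ s → x w = 0} where
  toFun p := ⟨(p.1.rep v)⁻¹ • p.1.rep, inv_mul_cancel₀ p.2.2, fun w hw => by simp [p.2.1 w hw]⟩
  invFun x :=
    have hx : x.1 ≠ 0 := fun h => by simpa [h] using x.2.1
    ⟨mk k x.1 hx, fun w hw => (rep_mk_apply_eq_zero_iff hx w).2 (x.2.2 w hw),
      by simp [rep_mk_apply_eq_zero_iff, x.2.1]⟩
  left_inv p := by
    ext1
    conv_rhs => rw [← mk_rep p.1]
    exact (mk_eq_mk_iff' k _ _ _ _).2 ⟨_, rfl⟩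
  right_inv x := by
    ext1
    obtain ⟨a, ha⟩ := exists_smul_eq_mk_rep k x.1 (fun h => by simpa [h] using x.2.1)
    simp only [← ha, Pi.smul_apply, x.2.1, smul_smul, Units.smul_def, smul_eq_mul, mul_one]
    rw [inv_mul_cancel₀ a.ne_zero, one_smul]

open Classical in
noncomputable def normalizedSupportEquiv {v : W} {s : Set W} (hv : v ∈ s) :
    {x : W → k // x v = 1 ∧ ∀ w, w ∉ s → x w = 0} ≃ (↥(s \ {v}) → k) where
  toFun x w := x.1 w
  invFun f := ⟨fun w => if h : w ∈ s \ {v} then f ⟨w, h⟩ else if w = v then 1 else 0,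
    by simp, fun w hw => by
      simp only [Set.mem_sdiff, hw, false_and, ↓reduceDIte, ite_eq_right_iff, one_ne_zero,
        imp_false]
      rintro rfl
      exact hw hv⟩
  left_inv x := by
    ext w
    by_cases hw : w ∈ s \ {v}
    · simp [hw]
    · simp only [hw, dif_neg, not_false_eq_true]
      split_ifs with hwv
      · rw [hwv, x.2.1]
      · exact (x.2.2 w (by simp_all)).symm
  right_inv f := by
    ext w
    simp [w.2]

theorem ncard_supportedChart [Finite W] [Finite k] {v : W} {s : Set W} (hv : v ∈ s) :
    (supportedChart k v s).ncard = Nat.card k ^ (s \ {v}).ncard := by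
  rw [← Nat.card_coe_set_eq, Nat.card_congr ((supportedChartEquiv v s).trans
    (normalizedSupportEquiv hv)), Nat.card_fun, Nat.card_coe_set_eq]

variable (H : SimpleGraph W)

theorem looseChart_eq_supportedChart (v : W) :
    looseChart H k v = supportedChart k v (insert v (H.neighborSet v)) := rfl

theorem ncard_looseChart_s5 [Finite W] [Finite k] (v : W) :
    (looseChart H k v).ncard = Nat.card k ^ (H.neighborSet v).ncard := by
  rw [looseChart_eq_supportedChart, ncard_supportedChart (Set.mem_insert _ _),
    Set.insert_sdiff_self_of_notMem H.notMem_neighborSet_self]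

variable {H}

theorem eq_or_adj_of_mem_looseChart {v u : W} {p : ℙ k (W → k)} (hp : p ∈ looseChart H k v)
    (hu : p.rep u ≠ 0) : u = v ∨ H.Adj v u := by
  by_contra h
  exact hu (hp.1 u (by simpa using h))

theorem adj_of_mem_looseChart_inter {v w : W} (hvw : v ≠ w) {p : ℙ k (W → k)}
    (hp : p ∈ looseChart H k v ∩ looseChart H k w) : H.Adj v w :=
  (eq_or_adj_of_mem_looseChart hp.1 hp.2.2).resolve_left hvw.symm

theorem looseChart_inter_eq_sdiff (hH : H.CliqueFree 3) {v w : W} (hvw : H.Adj v w) :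
    looseChart H k v ∩ looseChart H k w =
      supportedChart k v {v, w} \ supportedChart k v {v} := by
  ext p
  constructor
  · rintro ⟨hpv, hpw⟩
    refine ⟨⟨fun u hu => ?_, hpv.2⟩, fun h => hpw.2 (h.1 w (by simpa using hvw.ne'))⟩
    classical
    by_contra hpu
    simp only [Set.mem_insert_iff, Set.mem_singleton_iff, not_or] at hu
    have huv := (eq_or_adj_of_mem_looseChart hpv hpu).resolve_left hu.1
    have huw := (eq_or_adj_of_mem_looseChart hpw hpu).resolve_left hu.2
    exact hH {v, w, u} (SimpleGraph.is3Clique_triple_iff.2 ⟨hvw, huv, huw⟩)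
  · rintro ⟨⟨hsupp, hpv⟩, hnot⟩
    have hpw : p.rep w ≠ 0 := fun hw => hnot ⟨fun u hu => by
      by_cases huw : u = w
      · rwa [huw]
      · exact hsupp u (by simp_all), hpv⟩
    refine ⟨⟨fun u hu => hsupp u ?_, hpv⟩, ⟨fun u hu => hsupp u ?_, hpw⟩⟩ <;>
      simp only [Set.mem_insert_iff, SimpleGraph.mem_neighborSet, Set.mem_singleton_iff,
        not_or] at hu ⊢
    · exact ⟨hu.1, by rintro rfl; exact hu.2 hvw⟩
    · exact ⟨by rintro rfl; exact hu.2 hvw.symm, hu.1⟩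

theorem ncard_looseChart_inter_s5 [Finite W] [Finite k] (hH : H.CliqueFree 3) {v w : W}
    (hvw : H.Adj v w) : (looseChart H k v ∩ looseChart H k w).ncard = Nat.card k - 1 := by
  have hsub : supportedChart k v {v} ⊆ supportedChart k v {v, w} :=
    fun p hp => ⟨fun u hu => hp.1 u (fun h => hu (Or.inl h)), hp.2⟩
  rw [looseChart_inter_eq_sdiff hH hvw, Set.ncard_sdiff hsub, ncard_supportedChart (by simp),
    ncard_supportedChart (Set.mem_singleton v), Set.pair_sdiff_left hvw.ne, Set.sdiff_self]
  simp

theorem ncard_iUnion_looseChart_add [Finite W] [Finite k] {ι : Type*} [Fintype ι]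
    (hH : H.CliqueFree 3) {f : ι → W} (hf : f.Injective) :
    (⋃ i, looseChart H k (f i)).ncard + Nat.card (H.comap f).edgeSet * (Nat.card k - 1) =
      ∑ i, Nat.card k ^ (H.neighborSet (f i)).ncard := by
  classical
  have hpair (i j : ι) (hij : i ≠ j) :
      (looseChart H k (f i) ∩ looseChart H k (f j)).ncard =
        if H.Adj (f i) (f j) then Nat.card k - 1 else 0 := by
    split_ifs with hadj
    · exact ncard_looseChart_inter_s5 hH hadj
    · rw [Set.ncard_eq_zero]
      exact Set.eq_empty_of_forall_notMem fun p hp =>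
        hadj (adj_of_mem_looseChart_inter (hf.ne hij) hp)
  have htriple (i j l : ι) (hij : i ≠ j) (hil : i ≠ l) (hjl : j ≠ l) :
      looseChart H k (f i) ∩ looseChart H k (f j) ∩ looseChart H k (f l) = ∅ :=
    Set.eq_empty_of_forall_notMem fun p ⟨⟨hi, hj⟩, hl⟩ =>
      hH {f i, f j, f l} (SimpleGraph.is3Clique_triple_iff.2
        ⟨adj_of_mem_looseChart_inter (hf.ne hij) ⟨hi, hj⟩,
          adj_of_mem_looseChart_inter (hf.ne hil) ⟨hi, hl⟩,
          adj_of_mem_looseChart_inter (hf.ne hjl) ⟨hj, hl⟩⟩)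
  have hadj_pairs : Finset.univ.offDiag.filter (fun p : ι × ι => H.Adj (f p.1) (f p.2)) =
      Finset.univ.filter (fun p : ι × ι => (H.comap f).Adj p.1 p.2) := by
    ext p
    simpa using fun h => hf.ne_iff.1 h.ne
  have hIE := two_mul_ncard_iUnion_add_sum_offDiag _ htriple
  rw [Finset.sum_congr rfl fun p hp => hpair p.1 p.2 (Finset.mem_offDiag.1 hp).2.2,
    ← Finset.sum_filter, Finset.sum_const, smul_eq_mul, hadj_pairs,
    ← SimpleGraph.two_mul_card_edgeFinset, SimpleGraph.edgeFinset_card,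
    ← Nat.card_eq_fintype_card] at hIE
  simp only [ncard_looseChart_s5] at hIE
  linarith

end looseChart

namespace SimpleGraph

variable {V : Type} {G T : SimpleGraph V}

theorem card_adj_and_not_adj_add_two_mul_card_edgeFinset [Fintype V] [DecidableEq V]
    [DecidableRel G.Adj] [DecidableRel T.Adj] (hle : T ≤ G) :
    Fintype.card {p : V × V // G.Adj p.1 p.2 ∧ ¬T.Adj p.1 p.2} + 2 * #T.edgeFinset =
      2 * #G.edgeFinset := by
  have hfilter : Finset.univ.filter (fun p : V × V => G.Adj p.1 p.2 ∧ T.Adj p.1 p.2) =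
      Finset.univ.filter (fun p : V × V => T.Adj p.1 p.2) :=
    Finset.filter_congr fun p _ => and_iff_right_of_imp fun h => hle h
  rw [two_mul_card_edgeFinset, two_mul_card_edgeFinset, Fintype.card_subtype, ← hfilter,
    ← Finset.filter_filter, ← Finset.filter_filter, add_comm]
  exact Finset.card_filter_add_card_filter_not _

end SimpleGraph

section spanningResolution

open SimpleGraph

variable {V : Type} {G T : SimpleGraph V}

theorem spanningResolution_comap_inl : (spanningResolution G T).comap Sum.inl = T := rfl

theorem eq_inl_of_spanningResolution_adj_inr {p} {x}
    (h : (spanningResolution G T).Adj (Sum.inr p) x) : x = Sum.inl p.1.1 := by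
  cases x with
  | inl a => rw [show a = p.1.1 from h]
  | inr q => exact h.elim

noncomputable def spanningResolutionNeighborSetInlEquiv (hle : T ≤ G) (v : V) :
    (spanningResolution G T).neighborSet (Sum.inl v) ≃ G.neighborSet v where
  toFun
    | ⟨Sum.inl w, h⟩ => ⟨w, hle h⟩
    | ⟨Sum.inr p, h⟩ => ⟨p.1.2, by rw [show v = p.1.1 from h]; exact p.2.1⟩
  invFun w :=
    open Classical in
    if h : T.Adj v w then ⟨Sum.inl w, h⟩ else ⟨Sum.inr ⟨(v, w), w.2, h⟩, rfl⟩
  left_inv := by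
    rintro ⟨w | p, h⟩
    · simp [show T.Adj v w from h]
    · obtain rfl : v = p.1.1 := h
      simp [p.2.2]
  right_inv := by
    rintro ⟨w, hw⟩
    by_cases h : T.Adj v w <;> simp [h]

theorem spanningResolution_degree_inl (hle : T ≤ G) (v : V)
    [Fintype ((spanningResolution G T).neighborSet (Sum.inl v))] [Fintype (G.neighborSet v)] :
    (spanningResolution G T).degree (Sum.inl v) = G.degree v := by
  rw [← card_neighborSet_eq_degree, ← card_neighborSet_eq_degree]
  exact Fintype.card_congr (spanningResolutionNeighborSetInlEquiv hle v)

theorem spanningResolution_degree_inr (p : {p : V × V // G.Adj p.1 p.2 ∧ ¬T.Adj p.1 p.2})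
    [Fintype ((spanningResolution G T).neighborSet (Sum.inr p))] :
    (spanningResolution G T).degree (Sum.inr p) = 1 := by
  rw [← card_neighborSet_eq_degree, Fintype.card_eq_one_iff]
  exact ⟨⟨Sum.inl p.1.1, rfl⟩, fun x => Subtype.ext (eq_inl_of_spanningResolution_adj_inr x.2)⟩

theorem spanningResolution_connected (hT : T.Connected) : (spanningResolution G T).Connected := by
  let inl : T →g spanningResolution G T := ⟨Sum.inl, id⟩
  have hreach : ∀ x, ∃ a, (spanningResolution G T).Reachable x (Sum.inl a)
    | Sum.inl a => ⟨a, .rfl⟩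
    | Sum.inr p => ⟨p.1.1, Adj.reachable rfl⟩
  have := hT.nonempty
  refine ⟨fun x y => ?_⟩
  obtain ⟨a, hxa⟩ := hreach x
  obtain ⟨b, hyb⟩ := hreach y
  exact hxa.trans (((hT.preconnected a b).map inl).trans hyb.symm)

theorem spanningResolution_isTree [Finite V] (hle : T ≤ G) (hT : T.IsTree) :
    (spanningResolution G T).IsTree := by
  classical
  have := Fintype.ofFinite V
  rw [isTree_iff_connected_and_card]
  refine ⟨spanningResolution_connected hT.connected, ?_⟩
  have hdeg := (spanningResolution G T).sum_degrees_eq_twice_card_edges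
  rw [Fintype.sum_sum_type] at hdeg
  simp only [spanningResolution_degree_inl hle, spanningResolution_degree_inr, Finset.sum_const,
    Finset.card_univ, smul_eq_mul, mul_one, G.sum_degrees_eq_twice_card_edges] at hdeg
  have hpendant := card_adj_and_not_adj_add_two_mul_card_edgeFinset hle
  have hTcard := hT.card_edgeFinset
  rw [Nat.card_eq_fintype_card, ← edgeFinset_card, Nat.card_eq_fintype_card, Fintype.card_sum]
  omega

theorem ncard_iUnion_looseChart_spanningResolution_add [Fintype V] (hle : T ≤ G) (hT : T.IsTree)
    (k : Type) [Field k] [Finite k] :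
    (⋃ v, looseChart (spanningResolution G T) k (Sum.inl v)).ncard +
        (Nat.card V - 1) * (Nat.card k - 1) =
      ∑ v, Nat.card k ^ (G.neighborSet v).ncard := by
  have hcount := ncard_iUnion_looseChart_add (k := k)
    ((spanningResolution_isTree hle hT).isAcyclic.cliqueFree le_rfl) Sum.inl_injective
  have hTcard := (isTree_iff_connected_and_card.1 hT).2
  have hdeg (v : V) :
      ((spanningResolution G T).neighborSet (Sum.inl v)).ncard = (G.neighborSet v).ncard :=
    Nat.card_congr (spanningResolutionNeighborSetInlEquiv hle v)
  rw [← hTcard, Nat.add_sub_cancel]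
  simpa only [spanningResolution_comap_inl, hdeg] using hcount

end spanningResolution

theorem spanning_resolution_tree_and_count_independent_general {V : Type} [Fintype V]
    (G : SimpleGraph V) :
    (∀ T : SimpleGraph V, T ≤ G → T.IsTree → (spanningResolution G T).IsTree) ∧
    (∀ T₁ T₂ : SimpleGraph V, T₁ ≤ G → T₁.IsTree → T₂ ≤ G → T₂.IsTree →
      ∀ (k : Type) [Field k] [Fintype k],
        (⋃ v : V, looseChart (spanningResolution G T₁) k (Sum.inl v)).ncard =
        (⋃ v : V, looseChart (spanningResolution G T₂) k (Sum.inl v)).ncard) := by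
  refine ⟨fun T hle hT => spanningResolution_isTree hle hT, ?_⟩
  intro T₁ T₂ hle₁ hT₁ hle₂ hT₂ k _ _
  have h₁ := ncard_iUnion_looseChart_spanningResolution_add hle₁ hT₁ k
  have h₂ := ncard_iUnion_looseChart_spanningResolution_add hle₂ hT₂ k
  omega

/-- For a finite connected graph `G` with at least one edge: for every spanning
tree `T` of `G`, the completion `Ĥ_T` of the loose graph obtained by resolving
all non-tree edges is a tree; and for any two spanning trees `T₁, T₂` of `G`
and every finite field `k`, the numbers of `k`-rational points of the
associated schemes coincide (the vertex subset being `S = V`). -/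
theorem spanning_resolution_tree_and_count_independent {V : Type} [Fintype V]
    (G : SimpleGraph V) (hconn : G.Connected) (hEdge : ∃ a b, G.Adj a b) :
    (∀ T : SimpleGraph V, T ≤ G → T.IsTree → (spanningResolution G T).IsTree) ∧
    (∀ T₁ T₂ : SimpleGraph V, T₁ ≤ G → T₁.IsTree → T₂ ≤ G → T₂.IsTree →
      ∀ (k : Type) [Field k] [Fintype k],
        (⋃ v : V, looseChart (spanningResolution G T₁) k (Sum.inl v)).ncard =
        (⋃ v : V, looseChart (spanningResolution G T₂) k (Sum.inl v)).ncard) :=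
  spanning_resolution_tree_and_count_independent_general G
end

section
/- (Inner Tree Theorem, projective version.) Let T be a finite tree with vertex set V, let I = { v ∈ V : deg_T(v) ≥ 2 } be its set of inner vertices, and assume |I| ≥ 2. Let k be any field, let X = ⋃_{v ∈ V} A_v^T(k) ⊆ ℙ(k^V) be the set of k-rational points of F(T) ⊗_{F1} k, and let X_I = ⋃_{v ∈ I} { [x] ∈ ℙ(k^V) : x_w = 0 for all w ∉ ({v} ∪ N_T(v)) ∩ I, and x_v ≠ 0 } be the rational point set of the embedded inner subtree T(I). Then for every field automorphism σ of k and every σ-semilinear bijection g of the vector space k^V whose induced map ḡ on ℙ(k^V) satisfies ḡ(X) = X, one has ḡ(X_I) = X_I. -/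
/-- The rational point set of the embedded inner subtree `T(I)`: the union over
inner vertices `v ∈ I` of the sets
`{ [x] : x_w = 0 for all w ∉ ({v} ∪ N_T(v)) ∩ I, and x_v ≠ 0 }`. -/
def innerTreePoints {V : Type} (T : SimpleGraph V) (k : Type) [Field k]
    (I : Set V) : Set (Projectivization k (V → k)) :=
  ⋃ v ∈ I, {p | (∀ w, w ∉ (insert v (T.neighborSet v)) ∩ I → p.rep w = 0) ∧
    p.rep v ≠ 0}

/-!
Pass to the affine cone `C ⊆ k^V` over `X`: `x ∈ C` iff `x_v ≠ 0` and `x` is supported on the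
closed neighbourhood `N[v]` for some `v`. Then `ḡ(X) = X` says that `g` preserves `C`, and the
cone over `X_I` is `C ∩ k^I`, so it suffices that `g(e_v)` is supported on `I` for every inner
vertex `v` (and the same for `g⁻¹`).

Suppose `g(e_v)_p ≠ 0` for a leaf `p` with neighbour `m`. A vector of `C` that is nonzero at `p`
is supported on `N[m]`, and since `k^{N[m]}` is a subspace this propagates along the relations
`e_u + e_v, e_v + e_w, e_v + e_w + e_t ∈ C` of a path `u – v – w – t` through an inner edge `vw`
(which exists because `|I| ≥ 2`): all of `g(e_u), g(e_v), g(e_w), g(e_t)` lie in `k^{N[m]}`.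
A vector of `k^{N[m]}` with nonzero `m`-coordinate lies in `C`, so the `m`-coordinates of the
`g(e_a)` cancel on each of the sets `{u, w}, {v, t}, {u, t}, {u, v, t}`, which lie in no closed
neighbourhood of one of their vertices; hence they vanish at `v` and `w`. Since trees have no
triangles, a vector of `C ∩ k^{N[m]}` with vanishing `m`-coordinate is a monomial, and `g(e_v)`,
`g(e_w)`, `g(e_v + e_w)` being monomials forces `g(e_v)` and `g(e_w)` to be proportional,
contradicting injectivity.
-/

open Projectivization
open scoped LinearAlgebra.Projectivization

namespace SimpleGraph

variable {V : Type*} {G : SimpleGraph V}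

def closedNeighborSet (G : SimpleGraph V) (v : V) : Set V := insert v (G.neighborSet v)

@[simp]
lemma mem_closedNeighborSet {v w : V} : w ∈ G.closedNeighborSet v ↔ w = v ∨ G.Adj v w := by
  simp [closedNeighborSet]

lemma IsAcyclic.not_adj_of_adj_of_adj (hG : G.IsAcyclic) {a b c : V} (hab : G.Adj a b)
    (hbc : G.Adj b c) : ¬ G.Adj a c := by
  intro hac
  have hp : (Walk.cons hab (Walk.cons hbc Walk.nil)).IsPath := by
    simp [Walk.cons_isPath_iff, hab.ne, hbc.ne, hac.ne]
  exact hbc.ne (hG.eq_snd_of_adj_start hp hac (by simp)).symm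

lemma IsAcyclic.subsingleton_commonNeighbors (hG : G.IsAcyclic) {a c : V} (hac : a ≠ c) :
    (G.commonNeighbors a c).Subsingleton := by
  simp only [Set.Subsingleton, mem_commonNeighbors]
  rintro u ⟨hau, hcu⟩ w ⟨haw, hcw⟩
  by_contra huw
  have hp : (Walk.cons hau (Walk.cons hcu.symm (Walk.cons hcw Walk.nil))).IsPath := by
    simp [Walk.cons_isPath_iff, hau.ne, hcu.ne', hcw.ne, hac, huw, haw.ne]
  exact huw (hG.eq_snd_of_adj_start hp haw (by simp)).symm

lemma closedNeighborSet_subset_of_neighborSet_eq_singleton {p m c : V}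
    (hpm : G.neighborSet p = {m}) (hpc : p ∈ G.closedNeighborSet c) :
    G.closedNeighborSet c ⊆ G.closedNeighborSet m := by
  have hadj : ∀ {u}, G.Adj p u ↔ u = m := fun {u} => by
    rw [← mem_neighborSet, hpm, Set.mem_singleton_iff]
  rcases mem_closedNeighborSet.1 hpc with rfl | hcp
  · intro s hs
    rcases mem_closedNeighborSet.1 hs with rfl | hps
    · exact mem_closedNeighborSet.2 (Or.inr (hadj.2 rfl).symm)
    · exact mem_closedNeighborSet.2 (Or.inl (hadj.1 hps))
  · rw [hadj.1 hcp.symm]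

variable [Fintype V] [DecidableRel G.Adj] {v : V}

lemma two_le_degree_iff : 2 ≤ G.degree v ↔ ∃ a b, G.Adj v a ∧ G.Adj v b ∧ a ≠ b := by
  simp [← card_neighborFinset_eq_degree, Nat.succ_le_iff, Finset.one_lt_card]

lemma exists_adj_ne_of_two_le_degree (hv : 2 ≤ G.degree v) (w : V) : ∃ u, G.Adj v u ∧ u ≠ w := by
  obtain ⟨u, hu, huw⟩ := Finset.exists_mem_ne (s := G.neighborFinset v) hv w
  exact ⟨u, (G.mem_neighborFinset v u).1 hu, huw⟩

lemma neighborSet_eq_singleton_of_degree_lt_two {m : V} (hv : G.degree v < 2) (hvm : G.Adj v m) :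
    G.neighborSet v = {m} := by
  ext u
  refine ⟨fun hvu => by_contra fun hum => ?_, fun hu => hu ▸ hvm⟩
  exact hv.not_ge (two_le_degree_iff.2 ⟨u, m, hvu, hvm, hum⟩)

lemma Connected.exists_adj_two_le_degree (hG : G.Connected) {v' : V} (hv' : 2 ≤ G.degree v')
    (hvv' : v ≠ v') : ∃ w, G.Adj v w ∧ 2 ≤ G.degree w := by
  classical
  obtain ⟨p, hp⟩ := (hG v v').some.toPath
  cases p with
  | nil => exact absurd rfl hvv'
  | cons hvx q =>
    cases q with
    | nil => exact ⟨_, hvx, hv'⟩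
    | cons hxy q =>
      refine ⟨_, hvx, two_le_degree_iff.2 ⟨_, _, hvx.symm, hxy, ?_⟩⟩
      rintro rfl
      simp [Walk.cons_isPath_iff] at hp

end SimpleGraph

open SimpleGraph

section Cones

variable {V : Type*} {T : SimpleGraph V} {k : Type*} [Field k]

variable (k) in
def supportedOn (S : Set V) : Submodule k (V → k) := Submodule.pi Sᶜ fun _ => ⊥

@[simp]
lemma mem_supportedOn {S : Set V} {x : V → k} : x ∈ supportedOn k S ↔ ∀ s ∉ S, x s = 0 := by
  simp [supportedOn, Submodule.mem_pi]

lemma mem_of_mem_supportedOn {S : Set V} {x : V → k} {s : V} (hx : x ∈ supportedOn k S)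
    (hxs : x s ≠ 0) : s ∈ S :=
  by_contra fun hs => hxs (mem_supportedOn.1 hx s hs)

lemma supportedOn_mono {S S' : Set V} (h : S ⊆ S') : supportedOn k S ≤ supportedOn k S' :=
  fun _ hx => mem_supportedOn.2 fun s hs => mem_supportedOn.1 hx s fun hs' => hs (h hs')

lemma apply_ne_zero_of_mem_supportedOn_singleton {x : V → k} {s : V} (hx : x ≠ 0)
    (hxs : x ∈ supportedOn k {s}) : x s ≠ 0 := by
  intro h
  refine hx (funext fun t => ?_)
  by_cases hts : t = s
  · rw [hts, h, Pi.zero_apply]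
  · exact mem_supportedOn.1 hxs t hts

lemma eq_of_add_mem_supportedOn_singleton {x y : V → k} {s t r : V} (hx : x ≠ 0) (hy : y ≠ 0)
    (hxs : x ∈ supportedOn k {s}) (hyt : y ∈ supportedOn k {t})
    (hxy : x + y ∈ supportedOn k {r}) : s = t := by
  by_contra hst
  have hxt : x t = 0 := mem_supportedOn.1 hxs t (Ne.symm hst)
  have hys : y s = 0 := mem_supportedOn.1 hyt s hst
  have hsr : s = r := by_contra fun h => apply_ne_zero_of_mem_supportedOn_singleton hx hxs <| by
    simpa [hys] using mem_supportedOn.1 hxy s h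
  have htr : t = r := by_contra fun h => apply_ne_zero_of_mem_supportedOn_singleton hy hyt <| by
    simpa [hxt] using mem_supportedOn.1 hxy t h
  exact hst (hsr.trans htr.symm)

lemma exists_smul_eq_of_mem_supportedOn_singleton {x y : V → k} {s : V} (hx : x ≠ 0)
    (hxs : x ∈ supportedOn k {s}) (hys : y ∈ supportedOn k {s}) : ∃ c : k, y = c • x := by
  refine ⟨y s / x s, funext fun t => ?_⟩
  by_cases hts : t = s
  · subst hts
    simp [apply_ne_zero_of_mem_supportedOn_singleton hx hxs]
  · simp [mem_supportedOn.1 hxs t hts, mem_supportedOn.1 hys t hts]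

variable (T k) in
def chartCone : Set (V → k) := {x | ∃ v, x v ≠ 0 ∧ x ∈ supportedOn k (T.closedNeighborSet v)}

lemma ne_zero_of_mem_chartCone {x : V → k} (hx : x ∈ chartCone T k) : x ≠ 0 := by
  rintro rfl
  obtain ⟨v, hv, -⟩ := hx
  exact hv rfl

lemma sum_single_mem_chartCone_iff [DecidableEq V] (A : Finset V) :
    ∑ a ∈ A, Pi.single a (1 : k) ∈ chartCone T k ↔ ∃ c ∈ A, ↑A ⊆ T.closedNeighborSet c := by
  have hsum : ∀ s, (∑ a ∈ A, Pi.single a (1 : k)) s = if s ∈ A then 1 else 0 := by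
    intro s
    simp [Pi.single_apply]
  simp only [chartCone, Set.mem_ofPred_eq, mem_supportedOn, hsum, ne_eq, ite_eq_right_iff,
    one_ne_zero, imp_false, not_not, not_imp_comm]
  exact Iff.rfl

lemma mem_supportedOn_of_mem_chartCone {p m : V} (hpm : T.neighborSet p = {m}) {x : V → k}
    (hx : x ∈ chartCone T k) (hxp : x p ≠ 0) : x ∈ supportedOn k (T.closedNeighborSet m) := by
  obtain ⟨c, -, hxc⟩ := hx
  exact supportedOn_mono
    (closedNeighborSet_subset_of_neighborSet_eq_singleton hpm (mem_of_mem_supportedOn hxc hxp)) hxc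

lemma mem_supportedOn_of_add_mem_chartCone {p m : V} (hpm : T.neighborSet p = {m}) {x y : V → k}
    (hx : x ∈ chartCone T k) (hy : y ∈ chartCone T k) (hxy : x + y ∈ chartCone T k)
    (hyp : y p ≠ 0) : x ∈ supportedOn k (T.closedNeighborSet m) := by
  by_cases hxp : x p = 0
  · have hxyp : (x + y) p ≠ 0 := by simpa [hxp] using hyp
    simpa using sub_mem (mem_supportedOn_of_mem_chartCone hpm hxy hxyp)
      (mem_supportedOn_of_mem_chartCone hpm hy hyp)
  · exact mem_supportedOn_of_mem_chartCone hpm hx hxp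

lemma apply_eq_zero_of_not_mem_chartCone {m : V} {x : V → k}
    (hx : x ∈ supportedOn k (T.closedNeighborSet m)) (hxC : x ∉ chartCone T k) : x m = 0 :=
  by_contra fun hxm => hxC ⟨m, hxm, hx⟩

lemma exists_mem_supportedOn_singleton (hT : T.IsAcyclic) {m : V} {x : V → k}
    (hx : x ∈ chartCone T k) (hxm : x ∈ supportedOn k (T.closedNeighborSet m)) (hm : x m = 0) :
    ∃ c, x ∈ supportedOn k {c} := by
  obtain ⟨c, hc, hxc⟩ := hx
  refine ⟨c, mem_supportedOn.2 fun s hsc => by_contra fun hs => ?_⟩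
  have hmc : T.Adj m c := (mem_closedNeighborSet.1 (mem_of_mem_supportedOn hxm hc)).resolve_left
    fun h => hc (h ▸ hm)
  have hcs : T.Adj c s := (mem_closedNeighborSet.1 (mem_of_mem_supportedOn hxc hs)).resolve_left hsc
  have hms : T.Adj m s := (mem_closedNeighborSet.1 (mem_of_mem_supportedOn hxm hs)).resolve_left
    fun h => hs (h ▸ hm)
  exact hT.not_adj_of_adj_of_adj hmc hcs hms

end Cones

section Projective

variable {K E : Type*} [Field K] [AddCommGroup E] [Module K E]

def affineCone (P : Set (ℙ K E)) : Set E := {x | ∃ hx : x ≠ 0, mk K x hx ∈ P}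

lemma rep_apply_eq_zero_iff {ι : Type*} {x : ι → K} (hx : x ≠ 0) (i : ι) :
    (mk K x hx).rep i = 0 ↔ x i = 0 := by
  obtain ⟨a, ha⟩ := (mk_eq_mk_iff K _ x (rep_nonzero _) hx).1 (mk_rep _)
  rw [← ha, Units.smul_def, Pi.smul_apply, smul_eq_mul, mul_eq_zero, or_iff_right a.ne_zero]

lemma map_image_eq_self_iff {σ σ' : K →+* K} [RingHomInvPair σ σ'] [RingHomInvPair σ' σ]
    (e : E ≃ₛₗ[σ] E) (P : Set (ℙ K E)) :
    map (e : E →ₛₗ[σ] E) e.injective '' P = P ↔ ∀ x, e x ∈ affineCone P ↔ x ∈ affineCone P := by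
  constructor
  · intro h x
    constructor
    · rintro ⟨hex, hP⟩
      rw [← h] at hP
      obtain ⟨q, hq, hqx⟩ := hP
      induction q using ind with | h y hy =>
      have hx : x ≠ 0 := e.map_ne_zero_iff.1 hex
      refine ⟨hx, ?_⟩
      rwa [← map_injective (e : E →ₛₗ[σ] E) e.injective (hqx.trans (map_mk _ _ x hx).symm)]
    · rintro ⟨hx, hP⟩
      exact ⟨e.map_ne_zero_iff.2 hx, h ▸ ⟨_, hP, map_mk _ _ x hx⟩⟩
  · intro h
    ext q
    constructor
    · rintro ⟨q, hq, rfl⟩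
      induction q using ind with | h y hy =>
      exact ((h y).2 ⟨hy, hq⟩).2
    · induction q using ind with | h x hx =>
      intro hP
      obtain ⟨hy, hyP⟩ := (h (e.symm x)).1 (by simpa using ⟨hx, hP⟩)
      refine ⟨_, hyP, ?_⟩
      rw [map_mk]
      congr 1
      exact e.apply_symm_apply x

end Projective

section RationalPoints

variable {V : Type} {k : Type} [Field k]

variable (T : SimpleGraph V) (k)

lemma affineCone_iUnion_looseChart : affineCone (⋃ v, looseChart T k v) = chartCone T k := by
  ext x
  simp only [affineCone, looseChart, chartCone, Set.mem_iUnion, Set.mem_ofPred_eq,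
    mem_supportedOn, rep_apply_eq_zero_iff, closedNeighborSet, ne_eq]
  constructor
  · rintro ⟨-, v, hx, hv⟩
    exact ⟨v, hv, hx⟩
  · rintro ⟨v, hv, hx⟩
    exact ⟨fun h => hv (congrFun h v), v, hx, hv⟩

lemma affineCone_innerTreePoints (I : Set V) :
    affineCone (innerTreePoints T k I) = chartCone T k ∩ supportedOn k I := by
  ext x
  simp only [affineCone, innerTreePoints, chartCone, Set.mem_iUnion, Set.mem_ofPred_eq,
    mem_supportedOn, rep_apply_eq_zero_iff, closedNeighborSet, Set.mem_inter_iff, ne_eq,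
    SetLike.mem_coe]
  constructor
  · rintro ⟨-, v, -, hx, hv⟩
    exact ⟨⟨v, hv, fun s hs => hx s fun h => hs h.1⟩, fun s hs => hx s fun h => hs h.2⟩
  · rintro ⟨⟨v, hv, hx⟩, hI⟩
    refine ⟨fun h => hv (congrFun h v), v, by_contra fun h => hv (hI v h), fun s hs => ?_, hv⟩
    by_cases hsv : s ∈ insert v (T.neighborSet v)
    · exact hI s fun h => hs ⟨hsv, h⟩
    · exact hx s hsv

end RationalPoints

section Core

variable {V : Type*} [DecidableEq V] {T : SimpleGraph V} {k : Type*} [Field k] {σ : k →+* k}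
  {f : (V → k) →ₛₗ[σ] (V → k)}

lemma map_sum_single_mem_chartCone_iff (hC : ∀ x, f x ∈ chartCone T k ↔ x ∈ chartCone T k)
    (A : Finset V) :
    ∑ a ∈ A, f (Pi.single a 1) ∈ chartCone T k ↔ ∃ c ∈ A, ↑A ⊆ T.closedNeighborSet c := by
  rw [← map_sum, hC, sum_single_mem_chartCone_iff]

lemma map_single_mem_chartCone (hC : ∀ x, f x ∈ chartCone T k ↔ x ∈ chartCone T k) (a : V) :
    f (Pi.single a 1) ∈ chartCone T k := by
  simpa using (map_sum_single_mem_chartCone_iff hC {a}).2 ⟨a, by simp⟩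

lemma map_single_add_map_single_mem_chartCone
    (hC : ∀ x, f x ∈ chartCone T k ↔ x ∈ chartCone T k) {a b : V} (hab : T.Adj a b) :
    f (Pi.single a 1) + f (Pi.single b 1) ∈ chartCone T k := by
  simpa [Finset.sum_pair hab.ne] using (map_sum_single_mem_chartCone_iff hC {a, b}).2
    ⟨a, by simp, by simp [Set.insert_subset_iff, hab]⟩

lemma map_single_mem_supportedOn (hC : ∀ x, f x ∈ chartCone T k ↔ x ∈ chartCone T k)
    {p m u v w t : V} (hpm : T.neighborSet p = {m}) (hvu : T.Adj v u) (hvw : T.Adj v w)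
    (hwt : T.Adj w t) (htv : t ≠ v) (hvp : f (Pi.single v 1) p ≠ 0) :
    ∀ a ∈ ({u, v, w, t} : Finset V), f (Pi.single a 1) ∈ supportedOn k (T.closedNeighborSet m) := by
  have hCv := map_single_mem_chartCone hC v
  have hLv := mem_supportedOn_of_mem_chartCone hpm hCv hvp
  have hL : ∀ a, T.Adj v a → f (Pi.single a 1) ∈ supportedOn k (T.closedNeighborSet m) :=
    fun a hva => mem_supportedOn_of_add_mem_chartCone hpm (map_single_mem_chartCone hC a) hCv
      (map_single_add_map_single_mem_chartCone hC hva.symm) hvp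
  have hCwtv : f (Pi.single w 1) + f (Pi.single t 1) + f (Pi.single v 1) ∈ chartCone T k := by
    simpa [Finset.sum_insert, Finset.sum_pair htv, hwt.ne, hvw.ne', add_assoc] using
      (map_sum_single_mem_chartCone_iff hC {w, t, v}).2
        ⟨w, by simp, by simp [Set.insert_subset_iff, hwt, hvw.symm]⟩
  have hLwt := mem_supportedOn_of_add_mem_chartCone hpm
    (map_single_add_map_single_mem_chartCone hC hwt) hCv hCwtv hvp
  have hLt : f (Pi.single t 1) ∈ supportedOn k (T.closedNeighborSet m) := by
    simpa using sub_mem hLwt (hL w hvw)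
  simp only [Finset.mem_insert, Finset.mem_singleton]
  rintro a (rfl | rfl | rfl | rfl)
  exacts [hL a hvu, hLv, hL a hvw, hLt]

lemma map_single_apply_eq_zero_of_path (hT : T.IsAcyclic)
    (hC : ∀ x, f x ∈ chartCone T k ↔ x ∈ chartCone T k) {m u v w t : V} (hvu : T.Adj v u)
    (hvw : T.Adj v w) (hwt : T.Adj w t) (huw : u ≠ w) (htv : t ≠ v)
    (hL : ∀ a ∈ ({u, v, w, t} : Finset V),
      f (Pi.single a 1) ∈ supportedOn k (T.closedNeighborSet m)) :
    f (Pi.single v 1) m = 0 ∧ f (Pi.single w 1) m = 0 := by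
  have hut : u ≠ t := by
    rintro rfl
    exact hT.not_adj_of_adj_of_adj hvu hwt.symm hvw
  have hnuw : ¬ T.Adj u w := hT.not_adj_of_adj_of_adj hvu.symm hvw
  have hnvt : ¬ T.Adj v t := hT.not_adj_of_adj_of_adj hvw hwt
  have hnut : ¬ T.Adj u t := fun hut' =>
    huw (hT.subsingleton_commonNeighbors htv.symm ⟨hvu, hut'.symm⟩ ⟨hvw, hwt.symm⟩)
  have key : ∀ A ⊆ ({u, v, w, t} : Finset V), (¬ ∃ c ∈ A, ↑A ⊆ T.closedNeighborSet c) →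
      ∑ a ∈ A, f (Pi.single a 1) m = 0 := fun A hA hAC => by
    simpa using apply_eq_zero_of_not_mem_chartCone (sum_mem fun a ha => hL a (hA ha))
      ((map_sum_single_mem_chartCone_iff hC A).not.2 hAC)
  have h1 := key {u, w} (by simp [Finset.insert_subset_iff])
    (by simp [Set.insert_subset_iff, huw, huw.symm, hnuw, T.adj_comm w u])
  have h2 := key {v, t} (by simp [Finset.insert_subset_iff])
    (by simp [Set.insert_subset_iff, htv, htv.symm, hnvt, T.adj_comm t v])
  have h3 := key {u, t} (by simp [Finset.insert_subset_iff])
    (by simp [Set.insert_subset_iff, hut, hut.symm, hnut, T.adj_comm t u])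
  have h4 := key {u, v, t} (by simp [Finset.insert_subset_iff])
    (by simp [Set.insert_subset_iff, hut, hut.symm, htv, htv.symm, hnut, hnvt, T.adj_comm t u,
      T.adj_comm t v])
  simp only [Finset.sum_pair huw, Finset.sum_pair htv.symm, Finset.sum_pair hut] at h1 h2 h3
  rw [Finset.sum_insert (by simp [hvu.ne', hut]), Finset.sum_pair htv.symm] at h4
  exact ⟨by linear_combination h4 - h3, by linear_combination h1 - h4 + h2⟩

lemma map_single_apply_ne_zero_of_adj (hT : T.IsAcyclic) [RingHomSurjective σ]
    (hf : Function.Injective f) (hC : ∀ x, f x ∈ chartCone T k ↔ x ∈ chartCone T k)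
    {m v w : V} (hvw : T.Adj v w) (hv : f (Pi.single v 1) ∈ supportedOn k (T.closedNeighborSet m))
    (hw : f (Pi.single w 1) ∈ supportedOn k (T.closedNeighborSet m))
    (hvm : f (Pi.single v 1) m = 0) : f (Pi.single w 1) m ≠ 0 := by
  intro hwm
  have hCv := map_single_mem_chartCone hC v
  have hCw := map_single_mem_chartCone hC w
  have hCvw := map_single_add_map_single_mem_chartCone hC hvw
  obtain ⟨s, hs⟩ := exists_mem_supportedOn_singleton hT hCv hv hvm
  obtain ⟨s', hs'⟩ := exists_mem_supportedOn_singleton hT hCw hw hwm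
  obtain ⟨r, hr⟩ := exists_mem_supportedOn_singleton hT hCvw (add_mem hv hw) (by simp [hvm, hwm])
  obtain rfl := eq_of_add_mem_supportedOn_singleton (ne_zero_of_mem_chartCone hCv)
    (ne_zero_of_mem_chartCone hCw) hs hs' hr
  obtain ⟨c, hc⟩ :=
    exists_smul_eq_of_mem_supportedOn_singleton (ne_zero_of_mem_chartCone hCv) hs hs'
  obtain ⟨c, rfl⟩ := σ.surjective c
  have := congrFun (hf (hc.trans (f.map_smulₛₗ c _).symm)) w
  simp [hvw.ne'] at this

variable [Fintype V] [DecidableRel T.Adj]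

theorem map_single_apply_eq_zero (hT : T.IsTree) (hI : 2 ≤ {v | 2 ≤ T.degree v}.ncard)
    [RingHomSurjective σ] (hf : Function.Injective f)
    (hC : ∀ x, f x ∈ chartCone T k ↔ x ∈ chartCone T k) {v p : V} (hv : 2 ≤ T.degree v)
    (hp : T.degree p < 2) : f (Pi.single v 1) p = 0 := by
  by_contra hvp
  obtain ⟨v', hv', hv'v⟩ := Set.exists_ne_of_one_lt_ncard hI v
  obtain ⟨w, hvw, hw⟩ := hT.connected.exists_adj_two_le_degree hv' hv'v.symm
  obtain ⟨u, hvu, huw⟩ := exists_adj_ne_of_two_le_degree hv w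
  obtain ⟨t, hwt, htv⟩ := exists_adj_ne_of_two_le_degree hw v
  have : Nontrivial V := ⟨⟨v, w, hvw.ne⟩⟩
  obtain ⟨m, hpm⟩ := hT.connected.preconnected.exists_adj_of_nontrivial p
  have hL := map_single_mem_supportedOn hC (neighborSet_eq_singleton_of_degree_lt_two hp hpm)
    hvu hvw hwt htv hvp
  obtain ⟨hvm, hwm⟩ := map_single_apply_eq_zero_of_path hT.isAcyclic hC hvu hvw hwt huw htv hL
  exact map_single_apply_ne_zero_of_adj hT.isAcyclic hf hC hvw (hL v (by simp)) (hL w (by simp))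
    hvm hwm

theorem map_mem_supportedOn_inner (hT : T.IsTree) (hI : 2 ≤ {v | 2 ≤ T.degree v}.ncard)
    [RingHomSurjective σ] (hf : Function.Injective f)
    (hC : ∀ x, f x ∈ chartCone T k ↔ x ∈ chartCone T k) {x : V → k}
    (hx : x ∈ supportedOn k {v | 2 ≤ T.degree v}) : f x ∈ supportedOn k {v | 2 ≤ T.degree v} := by
  rw [← Finset.univ_sum_single x, map_sum]
  refine Submodule.sum_mem _ fun v _ => ?_
  by_cases hv : 2 ≤ T.degree v
  · rw [← mul_one (x v), ← smul_eq_mul, Pi.single_smul', map_smulₛₗ]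
    exact Submodule.smul_mem _ _ <| mem_supportedOn.2 fun p hp =>
      map_single_apply_eq_zero hT hI hf hC hv (not_le.1 hp)
  · simp [mem_supportedOn.1 hx v hv]

theorem map_mem_inner_iff {σ' : k →+* k} [RingHomInvPair σ σ'] [RingHomInvPair σ' σ]
    (hT : T.IsTree) (hI : 2 ≤ {v | 2 ≤ T.degree v}.ncard) (e : (V → k) ≃ₛₗ[σ] (V → k))
    (hC : ∀ x, e x ∈ chartCone T k ↔ x ∈ chartCone T k) (x : V → k) :
    e x ∈ chartCone T k ∩ supportedOn k {v | 2 ≤ T.degree v} ↔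
      x ∈ chartCone T k ∩ supportedOn k {v | 2 ≤ T.degree v} := by
  have hC' : ∀ y, e.symm y ∈ chartCone T k ↔ y ∈ chartCone T k := fun y => by
    rw [← hC, e.apply_symm_apply]
  refine ⟨fun ⟨hxC, hxI⟩ => ⟨(hC x).1 hxC, ?_⟩, fun ⟨hxC, hxI⟩ => ⟨(hC x).2 hxC, ?_⟩⟩
  · simpa using map_mem_supportedOn_inner hT hI (f := e.symm.toLinearMap) e.symm.injective hC' hxI
  · exact map_mem_supportedOn_inner hT hI (f := e.toLinearMap) e.injective hC hxI

end Core

/-- **Inner Tree Theorem** (projective version). Let `T` be a finite tree with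
inner vertex set `I = {v : deg v ≥ 2}`, `|I| ≥ 2`, and `k` a field. Every
`σ`-semilinear bijection `g` of `k^V` (for `σ` a field automorphism of `k`)
whose induced map `ḡ` on `ℙ(k^V)` stabilizes the rational point set
`X = ⋃_{v} A_v^T(k)` of `F(T) ⊗_{F1} k` also stabilizes the rational point set
`X_I` of the embedded inner subtree `T(I)`. -/
theorem inner_tree_theorem {V : Type} [Fintype V]
    (T : SimpleGraph V) [DecidableRel T.Adj] (hT : T.IsTree)
    (I : Set V) (hI : I = {v | 2 ≤ T.degree v}) (hIcard : 2 ≤ I.ncard)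
    (k : Type) [Field k] (σ : k ≃+* k)
    (g : (V → k) → (V → k)) (hgbij : Function.Bijective g)
    (hgadd : ∀ u v : V → k, g (u + v) = g u + g v)
    (hgsmul : ∀ (c : k) (v : V → k), g (c • v) = σ c • g v)
    (gbar : Projectivization k (V → k) → Projectivization k (V → k))
    (hgbar : ∀ (v : V → k) (hv : v ≠ 0) (hgv : g v ≠ 0),
      gbar (Projectivization.mk k v hv) = Projectivization.mk k (g v) hgv)
    (hX : gbar '' (⋃ v : V, looseChart T k v) = ⋃ v : V, looseChart T k v) :
    gbar '' innerTreePoints T k I = innerTreePoints T k I := by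
  classical
  subst hI
  have := RingHomInvPair.of_ringEquiv σ
  have := RingHomInvPair.of_ringEquiv_symm σ
  let e : (V → k) ≃ₛₗ[(σ : k →+* k)] (V → k) :=
    LinearEquiv.ofBijective { toFun := g, map_add' := hgadd, map_smul' := hgsmul } hgbij
  have hgbar' : gbar = map (e : (V → k) →ₛₗ[(σ : k →+* k)] (V → k)) e.injective :=
    funext <| ind fun x hx => hgbar x hx _
  rw [hgbar', map_image_eq_self_iff, affineCone_iUnion_looseChart] at hX
  rw [hgbar', map_image_eq_self_iff, affineCone_innerTreePoints]
  exact map_mem_inner_iff hT hIcard e hX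
end

section
/- Let Γ = (Ĝ, S) be a loose graph, let k be any field, and let W ⊆ S be a clique of Ĝ (any two distinct vertices of W are adjacent in Ĝ, and W is nonempty). Then the projective subspace { [x] ∈ ℙ(k^{V(Ĝ)}) : x_w = 0 for all w ∉ W } is entirely contained in X_Γ(k). In particular, if Ĝ = K_m is a complete graph on m ≥ 2 vertices and S = V(Ĝ), then X_Γ(k) = ℙ(k^m), i.e., the scheme attached to the complete graph K_m is the full projective space of dimension m − 1. (This is the rational-points version of the rule (CO): a sub complete graph K_m of Γ yields a closed projective subspace of dimension m − 1 in F(Γ).) -/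
/-- Rational-points version of rule (CO). For a loose graph `Γ = (Ĝ, S)`, a
field `k`, and a nonempty clique `W ⊆ S` of `Ĝ`, the projective subspace
`{ [x] : x_w = 0 for all w ∉ W }` is entirely contained in `X_Γ(k)`.
In particular, if `Ĝ` is the complete graph on `m ≥ 2` vertices and
`S = V(Ĝ)`, then `X_Γ(k)` is the full projective space `ℙ(k^m)`. -/
theorem clique_subspace_subset_points {V : Type} [Fintype V]
    (G : SimpleGraph V) [DecidableRel G.Adj] (S : Finset V)
    (hS1 : ∀ v ∉ S, G.degree v = 1)
    (hS2 : ∀ a b, G.Adj a b → a ∈ S ∨ b ∈ S)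
    (k : Type) [Field k]
    (W : Finset V) (hWS : W ⊆ S) (hWne : W.Nonempty)
    (hclique : G.IsClique (W : Set V)) :
    ({p : Projectivization k (V → k) | ∀ w ∉ W, p.rep w = 0} ⊆
      ⋃ v ∈ S, looseChart G k v) ∧
    (G = ⊤ → S = Finset.univ → 2 ≤ Fintype.card V →
      (⋃ v ∈ S, looseChart G k v) = Set.univ) := by
  constructor
  · intro p hp
    -- p.rep ≠ 0, so there is v with p.rep v ≠ 0; it must lie in W
    have hrep := p.rep_nonzero
    obtain ⟨v, hv⟩ : ∃ v, p.rep v ≠ 0 := by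
      by_contra h
      push_neg at h
      exact hrep (funext h)
    have hvW : v ∈ W := by
      by_contra hvW
      exact hv (hp v hvW)
    refine Set.mem_biUnion (hWS hvW) ?_
    refine ⟨?_, hv⟩
    intro w hw
    apply hp
    intro hwW
    apply hw
    rcases eq_or_ne w v with rfl | hne
    · exact Set.mem_insert _ _
    · exact Set.mem_insert_of_mem _ (hclique hvW hwW fun h => hne h.symm)
  · rintro rfl rfl _
    ext p
    simp only [Set.mem_univ, iff_true]
    have hrep := p.rep_nonzero
    obtain ⟨v, hv⟩ : ∃ v, p.rep v ≠ 0 := by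
      by_contra h
      push_neg at h
      exact hrep (funext h)
    refine Set.mem_biUnion (Finset.mem_univ v) ?_
    refine ⟨?_, hv⟩
    intro w hw
    exfalso
    apply hw
    rcases eq_or_ne w v with rfl | hne
    · exact Set.mem_insert _ _
    · exact Set.mem_insert_of_mem _ (by simpa [SimpleGraph.neighborSet] using hne.symm)
end
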